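/- arXiv:1309.6686 — 5 statements merged into one kernel-verified Lean document; each statement's English description precedes it below -/
import Mathlib

section
/- For every k ≥ 0 and every n ≥ k, Pa(n, P_k) = (k+1)·C(n−k, ⌊(n−k)/2⌋), where P_k is the chain on k+1 elements. -/
/-- A weak embedding of a poset `P` into the Boolean lattice `B_n`:
an injective map such that `a < b` implies `f a ⊊ f b`. -/
def IsWeakEmbedding {P : Type*} [PartialOrder P] {n : ℕ} (f : P → Finset (Fin n)) : Prop :=
  Function.Injective f ∧ ∀ a b : P, a < b → f a ⊂ f b

/-- A (weak) copy of the poset `P` in `B_n`: the image of a weak embedding. -/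
def IsCopy (P : Type*) [PartialOrder P] [Fintype P] {n : ℕ}
    (C : Finset (Finset (Fin n))) : Prop :=
  ∃ f : P → Finset (Fin n), IsWeakEmbedding f ∧ C = Finset.image f Finset.univ

/-- Two families of subsets of `[n]` are unrelated if no member of one is comparable
(under inclusion) with a member of the other. -/
def Unrelated {n : ℕ} (F₁ F₂ : Finset (Finset (Fin n))) : Prop :=
  ∀ A ∈ F₁, ∀ B ∈ F₂, ¬ A ⊆ B ∧ ¬ B ⊆ A

/-- `F` is a union of pairwise unrelated copies of `P` in `B_n`. -/
def IsUnionOfUnrelatedCopies (P : Type*) [PartialOrder P] [Fintype P] {n : ℕ}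
    (F : Finset (Finset (Fin n))) : Prop :=
  ∃ 𝒞 : Finset (Finset (Finset (Fin n))),
    (∀ C ∈ 𝒞, IsCopy P C) ∧
    (∀ C₁ ∈ 𝒞, ∀ C₂ ∈ 𝒞, C₁ ≠ C₂ → Unrelated C₁ C₂) ∧
    F = 𝒞.sup id

/-- `Pa P n`: the maximum size of a family of subsets of `[n]` that is a union of
pairwise unrelated copies of `P`. -/
noncomputable def Pa (P : Type*) [PartialOrder P] [Fintype P] (n : ℕ) : ℕ :=
  sSup {m | ∃ F : Finset (Finset (Fin n)), IsUnionOfUnrelatedCopies P F ∧ F.card = m}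

/-!
A copy of the chain `P_k` has a bottom `B` and a top `T ⊇ B` with `|T| ≥ |B| + k`, and for two
unrelated copies `B₁ ⊄ T₂`. So the pairs `(B, Tᶜ)` satisfy the hypotheses of Bollobás's set-pairs
inequality, which is proved by counting the orderings of `[n]` in which all of `B` precedes all of
`Tᶜ`: there are at least `n! / C(|B| + |Tᶜ|, |B|)` of them, and no ordering serves two copies.
Since `|B| + |Tᶜ| ≤ n - k`, there are at most `C(n - k, ⌊(n - k)/2⌋)` copies. Conversely, the sets
`S ∪ {n - j, …, n - 1}` with `S` in the middle layer of `[n - k]` and `j ≤ k` attain the bound.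
-/

open Finset Equiv
open scoped Nat

theorem Finset.exists_perm_lt_of_subset {α : Type*} [LinearOrder α] {P Q : Finset α}
    (hPQ : P ⊆ Q) :
    ∃ τ : Perm α, Q.map τ.toEmbedding = Q ∧ ∀ x ∈ P, ∀ y ∈ Q \ P, τ x < τ y := by
  let e := Q.orderEmbOfFin (k := #P + #(Q \ P)) (by rw [add_comm, card_sdiff_add_card_eq_card hPQ])
  let g : P ⊕ ↥(Q \ P) → α := fun s => e (finSumFinEquiv (s.map P.equivFin (Q \ P).equivFin))
  have hf : Function.Injective (Sum.elim ((↑) : P → α) ((↑) : ↥(Q \ P) → α)) :=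
    Subtype.val_injective.sumElim Subtype.val_injective
      fun x y hxy => (mem_sdiff.1 y.2).2 (hxy ▸ x.2)
  have hg : Function.Injective g :=
    e.injective.comp <| finSumFinEquiv.injective.comp <|
      Sum.map_injective.2 ⟨P.equivFin.injective, (Q \ P).equivFin.injective⟩
  obtain ⟨τ, hτ⟩ := Perm.exists_extending_pair _ g hf hg
  have hτQ : ∀ x ∈ Q, τ x ∈ Q := by
    intro x hx
    by_cases hxP : x ∈ P
    · exact (hτ (.inl ⟨x, hxP⟩)).symm ▸ Q.orderEmbOfFin_mem _ _
    · exact (hτ (.inr ⟨x, mem_sdiff.2 ⟨hx, hxP⟩⟩)).symm ▸ Q.orderEmbOfFin_mem _ _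
  refine ⟨τ, eq_of_subset_of_card_le (fun y hy => ?_) (card_map _).ge, fun x hx y hy => ?_⟩
  · rw [mem_map_equiv] at hy
    simpa using hτQ _ hy
  · rw [show τ x = _ from hτ (.inl ⟨x, hx⟩), show τ y = _ from hτ (.inr ⟨y, hy⟩)]
    simp only [g, Sum.map_inl, Sum.map_inr, finSumFinEquiv_apply_left,
      finSumFinEquiv_apply_right, OrderEmbedding.lt_iff_lt, Fin.lt_def, Fin.val_castAdd,
      Fin.val_natAdd]
    omega

section Precedence

variable {α : Type*} [Fintype α] [LinearOrder α]

/-- `ρ x` is read as the position of `x` in a linear ordering of `α`. -/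
def precedingPerms (B R : Finset α) : Finset (Perm α) :=
  {ρ | ∀ x ∈ B, ∀ y ∈ R, ρ x < ρ y}

theorem disjoint_precedingPerms {B₁ R₁ B₂ R₂ : Finset α} (h₁₂ : ¬Disjoint B₁ R₂)
    (h₂₁ : ¬Disjoint B₂ R₁) : Disjoint (precedingPerms B₁ R₁) (precedingPerms B₂ R₂) := by
  obtain ⟨x, hxB, hxR⟩ := not_disjoint_iff.1 h₁₂
  obtain ⟨y, hyB, hyR⟩ := not_disjoint_iff.1 h₂₁
  refine disjoint_left.2 fun ρ h₁ h₂ => ?_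
  simp only [precedingPerms, mem_filter, mem_univ, true_and] at h₁ h₂
  exact lt_asymm (h₁ x hxB y hyR) (h₂ y hyB x hxR)

theorem factorial_le_choose_mul_card_precedingPerms {B R : Finset α} (hBR : Disjoint B R) :
    (Fintype.card α)! ≤ (#B + #R).choose #B * #(precedingPerms B R) := by
  choose! τ hτQ hτlt using fun P Q : Finset α => exists_perm_lt_of_subset (P := P) (Q := Q)
  set U := B ∪ R
  -- `Φ ρ` moves `B` to the first places among the positions of `U`, so `ρ` is recovered from
  -- `Φ ρ` and the set of positions `ρ(B) ⊆ (Φ ρ)(U)`.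
  let Φ : Perm α → Perm α := fun ρ => τ (B.map ρ.toEmbedding) (U.map ρ.toEmbedding) * ρ
  have hBU : ∀ ρ : Perm α, B.map ρ.toEmbedding ⊆ U.map ρ.toEmbedding :=
    fun ρ => map_subset_map.2 subset_union_left
  have hΦU : ∀ ρ, U.map (Φ ρ).toEmbedding = U.map ρ.toEmbedding := fun ρ => by
    rw [show Φ ρ = _ * ρ from rfl, Perm.mul_def, Equiv.trans_toEmbedding, ← map_map,
      hτQ _ _ (hBU ρ)]
  have hΦ : ∀ ρ, Φ ρ ∈ precedingPerms B R := fun ρ => by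
    simp only [precedingPerms, mem_filter, mem_univ, true_and]
    intro x hx y hy
    refine hτlt _ _ (hBU ρ) (ρ x) (mem_map_equiv.2 (by simpa)) (ρ y) (mem_sdiff.2 ⟨?_, ?_⟩)
    · exact mem_map_equiv.2 (by simp [U, hy])
    · rw [mem_map_equiv]; simpa using disjoint_right.1 hBR hy
  have hfiber : ∀ ρ' ∈ precedingPerms B R, #{ρ | Φ ρ = ρ'} ≤ (#U).choose #B := by
    intro ρ' _
    calc #{ρ | Φ ρ = ρ'} ≤ #((U.map ρ'.toEmbedding).powersetCard #B) := by
          refine card_le_card_of_injOn (fun ρ => B.map ρ.toEmbedding) (fun ρ hρ => ?_)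
            (fun ρ₁ hρ₁ ρ₂ hρ₂ h => ?_)
          · simp only [coe_filter, mem_univ, true_and, Set.mem_ofPred_eq] at hρ
            simpa [← hρ, hΦU] using hBU ρ
          · simp only [coe_filter, mem_univ, true_and, Set.mem_ofPred_eq] at hρ₁ hρ₂
            have hU : U.map ρ₁.toEmbedding = U.map ρ₂.toEmbedding := by
              rw [← hΦU, hρ₁, ← hρ₂, hΦU]
            have h' : Φ ρ₁ = Φ ρ₂ := hρ₁.trans hρ₂.symm
            simp only [Φ] at h'
            rw [show B.map ρ₁.toEmbedding = B.map ρ₂.toEmbedding from h, hU] at h'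
            exact mul_left_cancel h'
      _ = (#U).choose #B := by rw [card_powersetCard, card_map]
  have := card_le_mul_card_image_of_maps_to (s := univ) (fun ρ _ => hΦ ρ) _ hfiber
  rwa [card_univ, Fintype.card_perm, card_union_of_disjoint hBR] at this

end Precedence

theorem bollobas_sum_inv_choose_le_one {ι α : Type*} [Fintype α] {s : Finset ι}
    {B R : ι → Finset α} (hBR : ∀ i ∈ s, Disjoint (B i) (R i))
    (hcross : ∀ i ∈ s, ∀ j ∈ s, i ≠ j → ¬Disjoint (B i) (R j)) :
    ∑ i ∈ s, (((#(B i) + #(R i)).choose #(B i) : ℕ) : ℚ)⁻¹ ≤ 1 := by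
  let _ : LinearOrder α := LinearOrder.lift' _ (Fintype.equivFin α).injective
  have hN : (0 : ℚ) < (Fintype.card α)! := by positivity
  have hE : ∀ i ∈ s, ((Fintype.card α)! : ℚ) * (((#(B i) + #(R i)).choose #(B i) : ℕ) : ℚ)⁻¹ ≤
      #(precedingPerms (B i) (R i)) := fun i hi => by
    have hC : (0 : ℚ) < (#(B i) + #(R i)).choose #(B i) :=
      Nat.cast_pos.2 (Nat.choose_pos (Nat.le_add_right _ _))
    rw [← div_eq_mul_inv, div_le_iff₀ hC, mul_comm]
    exact_mod_cast factorial_le_choose_mul_card_precedingPerms (hBR i hi)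
  have hsum : ∑ i ∈ s, (#(precedingPerms (B i) (R i)) : ℚ) ≤ (Fintype.card α)! := by
    rw [← Nat.cast_sum, ← card_biUnion fun i hi j hj hij =>
      disjoint_precedingPerms (hcross i hi j hj hij) (hcross j hj i hi hij.symm)]
    exact_mod_cast (card_le_univ _).trans_eq Fintype.card_perm
  refine le_of_mul_le_mul_left ?_ hN
  rw [mul_one, mul_sum]
  exact (sum_le_sum hE).trans hsum

section Copies

variable {P : Type*} [PartialOrder P] [Fintype P] {n : ℕ}

theorem IsCopy.card_eq {C : Finset (Finset (Fin n))} (h : IsCopy P C) :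
    #C = Fintype.card P := by
  obtain ⟨f, ⟨hf, -⟩, rfl⟩ := h
  rw [card_image_of_injective _ hf, card_univ]

theorem Unrelated.disjoint {C₁ C₂ : Finset (Finset (Fin n))} (h : Unrelated C₁ C₂) :
    Disjoint C₁ C₂ :=
  disjoint_left.2 fun X h₁ h₂ => (h X h₁ X h₂).1 subset_rfl

theorem card_sup_of_unrelated_copies {𝒞 : Finset (Finset (Finset (Fin n)))}
    (hcopy : ∀ C ∈ 𝒞, IsCopy P C)
    (hunrel : ∀ C₁ ∈ 𝒞, ∀ C₂ ∈ 𝒞, C₁ ≠ C₂ → Unrelated C₁ C₂) :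
    #(𝒞.sup id) = #𝒞 * Fintype.card P := by
  rw [sup_eq_biUnion,
    card_biUnion (t := id) fun C₁ h₁ C₂ h₂ hne => (hunrel C₁ h₁ C₂ h₂ hne).disjoint,
    ← smul_eq_mul, ← sum_const]
  exact sum_congr rfl fun C hC => (hcopy C hC).card_eq

/-- The copies are `{S ∪ c p | p : P}` for `S ∈ 𝒜`. -/
theorem exists_unrelated_copies_of_isAntichain [Nonempty P] {c : P → Finset (Fin n)}
    (hc : IsWeakEmbedding c) {𝒜 : Finset (Finset (Fin n))}
    (h𝒜 : IsAntichain (· ⊆ ·) (𝒜 : Set (Finset (Fin n))))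
    (hdisj : ∀ S ∈ 𝒜, ∀ p, Disjoint S (c p)) :
    ∃ F : Finset (Finset (Fin n)), IsUnionOfUnrelatedCopies P F ∧ #F = #𝒜 * Fintype.card P := by
  let copy : Finset (Fin n) → Finset (Finset (Fin n)) := fun S => univ.image (S ∪ c ·)
  have hcopy : ∀ S ∈ 𝒜, IsCopy P (copy S) := fun S hS => by
    refine ⟨(S ∪ c ·), ⟨fun p q hpq => hc.1 ?_, fun p q hpq => ?_⟩, rfl⟩
    · simp only at hpq
      rw [← union_sdiff_cancel_left (hdisj S hS p), hpq, union_sdiff_cancel_left (hdisj S hS q)]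
    · obtain ⟨x, hxq, hxp⟩ := (ssubset_iff_of_subset (hc.2 p q hpq).subset).1 (hc.2 p q hpq)
      refine (ssubset_iff_of_subset (union_subset_union_right (hc.2 p q hpq).subset)).2
        ⟨x, mem_union_right _ hxq, ?_⟩
      simpa [hxp] using disjoint_right.1 (hdisj S hS q) hxq
  have hunrel : ∀ S ∈ 𝒜, ∀ S' ∈ 𝒜, S ≠ S' → Unrelated (copy S) (copy S') := by
    have hsub : ∀ S ∈ 𝒜, ∀ S' ∈ 𝒜, S ≠ S' → ∀ p q, ¬S ∪ c p ⊆ S' ∪ c q :=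
      fun S hS S' hS' hne p q h => h𝒜 hS hS' hne
        (Disjoint.left_le_of_le_sup_right (subset_union_left.trans h) (hdisj S hS q))
    intro S hS S' hS' hne _ hX _ hY
    obtain ⟨p, -, rfl⟩ := mem_image.1 hX
    obtain ⟨q, -, rfl⟩ := mem_image.1 hY
    exact ⟨hsub S hS S' hS' hne p q, hsub S' hS' S hS hne.symm q p⟩
  have hinj : Set.InjOn copy 𝒜 := fun S hS S' hS' h => by
    by_contra hne
    obtain ⟨p⟩ := ‹Nonempty P›
    exact disjoint_left.1 (hunrel S hS S' hS' hne).disjoint (mem_image_of_mem _ (mem_univ p))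
      (h ▸ mem_image_of_mem _ (mem_univ p))
  have hcopies : ∀ C ∈ 𝒜.image copy, IsCopy P C := by
    simpa using hcopy
  have hunrels : ∀ C₁ ∈ 𝒜.image copy, ∀ C₂ ∈ 𝒜.image copy, C₁ ≠ C₂ → Unrelated C₁ C₂ := by
    simp only [mem_image]
    rintro _ ⟨S, hS, rfl⟩ _ ⟨S', hS', rfl⟩ hne
    exact hunrel S hS S' hS' fun h => hne (h ▸ rfl)
  refine ⟨(𝒜.image copy).sup id, ⟨_, hcopies, hunrels, rfl⟩, ?_⟩
  rw [card_sup_of_unrelated_copies hcopies hunrels, card_image_of_injOn hinj]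

end Copies

theorem IsCopy.exists_subset_card_add_le {k n : ℕ} {C : Finset (Finset (Fin n))}
    (h : IsCopy (Fin (k + 1)) C) : ∃ B ∈ C, ∃ T ∈ C, B ⊆ T ∧ #B + k ≤ #T := by
  obtain ⟨f, ⟨-, hf⟩, rfl⟩ := h
  have hmono : StrictMono f := hf
  have hcard : ∀ i : Fin (k + 1), #(f 0) + i ≤ #(f i) := by
    refine Fin.induction (by simp) fun i ih => ?_
    have := card_lt_card (hf _ _ (Fin.castSucc_lt_succ (i := i)))
    simp only [Fin.val_succ, Fin.val_castSucc] at ih ⊢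
    omega
  exact ⟨f 0, mem_image_of_mem _ (mem_univ _), f (Fin.last k), mem_image_of_mem _ (mem_univ _),
    hmono.monotone (Fin.zero_le _), by simpa using hcard (Fin.last k)⟩

theorem card_le_choose_of_unrelated_chain_copies {k n : ℕ} {𝒞 : Finset (Finset (Finset (Fin n)))}
    (hcopy : ∀ C ∈ 𝒞, IsCopy (Fin (k + 1)) C)
    (hunrel : ∀ C₁ ∈ 𝒞, ∀ C₂ ∈ 𝒞, C₁ ≠ C₂ → Unrelated C₁ C₂) :
    #𝒞 ≤ (n - k).choose ((n - k) / 2) := by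
  choose! B hB T hT hBT hcard using fun C hC => (hcopy C hC).exists_subset_card_add_le
  set M := (n - k).choose ((n - k) / 2)
  have hM : (0 : ℚ) < M := Nat.cast_pos.2 (Nat.choose_pos (Nat.div_le_self _ _))
  have hchoose : ∀ C ∈ 𝒞, (#(B C) + #(T C)ᶜ).choose #(B C) ≤ M := fun C hC => by
    have hT : #(T C) ≤ n := by simpa using card_le_univ (T C)
    have : #(B C) + #(T C)ᶜ ≤ n - k := by
      rw [card_compl, Fintype.card_fin]
      have := hcard C hC
      omega
    exact (Nat.choose_le_choose _ this).trans (Nat.choose_le_middle _ _)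
  have hbollobas := bollobas_sum_inv_choose_le_one (s := 𝒞) (B := B) (R := fun C => (T C)ᶜ)
    (fun C hC => disjoint_compl_right_iff.2 (hBT C hC))
    (fun C₁ h₁ C₂ h₂ hne => by
      rw [disjoint_compl_right_iff]
      exact (hunrel C₁ h₁ C₂ h₂ hne _ (hB C₁ h₁) _ (hT C₂ h₂)).1)
  have : (#𝒞 : ℚ) / M ≤ 1 := calc
    (#𝒞 : ℚ) / M = ∑ C ∈ 𝒞, (M : ℚ)⁻¹ := by rw [sum_const, nsmul_eq_mul, div_eq_mul_inv]
    _ ≤ ∑ C ∈ 𝒞, (((#(B C) + #(T C)ᶜ).choose #(B C) : ℕ) : ℚ)⁻¹ :=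
      sum_le_sum fun C hC => inv_anti₀ (Nat.cast_pos.2 (Nat.choose_pos (Nat.le_add_right _ _)))
        (by exact_mod_cast hchoose C hC)
    _ ≤ 1 := hbollobas
  exact_mod_cast (div_le_one hM).1 this

theorem exists_unrelated_chain_copies {k n : ℕ} (hkn : k ≤ n) :
    ∃ F : Finset (Finset (Fin n)), IsUnionOfUnrelatedCopies (Fin (k + 1)) F ∧
      #F = (k + 1) * (n - k).choose ((n - k) / 2) := by
  let c : Fin (k + 1) → Finset (Fin n) := fun j => {i | n - j ≤ (i : ℕ)}
  have hc : StrictMono c := fun a b hab => by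
    have hb : (b : ℕ) ≤ n := by omega
    refine (ssubset_iff_of_subset fun i => ?_).2 ⟨⟨n - b, by omega⟩, ?_, ?_⟩
    · simp only [c, mem_filter, mem_univ, true_and]
      omega
    · simp only [c, mem_filter, mem_univ, true_and]
      omega
    · simp only [c, mem_filter, mem_univ, true_and, not_le]
      omega
  let X : Finset (Fin n) := {i | (i : ℕ) < n - k}
  obtain ⟨F, hF, hcard⟩ := exists_unrelated_copies_of_isAntichain ⟨hc.injective, fun a b => @hc a b⟩
    (Set.sized_powersetCard X ((n - k) / 2)).isAntichain fun S hS j => by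
      refine disjoint_left.2 fun i hiS hic => ?_
      have := (mem_powersetCard.1 hS).1 hiS
      simp only [X, c, mem_filter, mem_univ, true_and] at this hic
      omega
  refine ⟨F, hF, ?_⟩
  rw [hcard, card_powersetCard, Fintype.card_fin, mul_comm]
  congr
  simp [X, Fin.card_filter_val_lt]

/-- Griggs–Stahl–Trotter. For `k ≥ 0` and `n ≥ k`,
`Pa(n, P_k) = (k+1)·C(n−k, ⌊(n−k)/2⌋)`, where `P_k` is the chain on `k+1`
elements (formalized as `Fin (k+1)`). -/
theorem pa_chain (k n : ℕ) (hkn : k ≤ n) :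
    Pa (Fin (k + 1)) n = (k + 1) * (n - k).choose ((n - k) / 2) := by
  refine IsGreatest.csSup_eq ⟨exists_unrelated_chain_copies hkn, ?_⟩
  rintro _ ⟨F, ⟨𝒞, hcopy, hunrel, rfl⟩, rfl⟩
  rw [card_sup_of_unrelated_copies hcopy hunrel, Fintype.card_fin, mul_comm]
  exact Nat.mul_le_mul_left _ (card_le_choose_of_unrelated_chain_copies hcopy hunrel)
end

section
/- Fix an integer m ≥ 1. Let ā(m, n) denote the minimum, over all families F of exactly m subsets of [n], of the number of full chains in B_n that intersect F. Then as n → ∞, ā(m, n) is asymptotically equal to m · n! / C(n, ⌊n/2⌋); that is, ā(m,n) · C(n, ⌊n/2⌋) / (m · n!) → 1. -/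
/-- A full (maximal) chain in `B_n`, recorded as the function assigning to each
`i ∈ {0, …, n}` the subset of size `i` belonging to the chain. -/
def IsFullChain {n : ℕ} (c : Fin (n+1) → Finset (Fin n)) : Prop :=
  (∀ i : Fin (n+1), (c i).card = (i : ℕ)) ∧ ∀ i j : Fin (n+1), i ≤ j → c i ⊆ c j

open scoped Classical in
/-- The number of full chains of `B_n` that contain at least one member of `F`. -/
noncomputable def chainCount {n : ℕ} (F : Finset (Finset (Fin n))) : ℕ :=
  (Finset.univ.filter (fun c : Fin (n+1) → Finset (Fin n) =>
    IsFullChain c ∧ ∃ i, c i ∈ F)).card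

/-- `ā(m, n)`: the minimum, over all families `F` of exactly `m` subsets of `[n]`,
of the number of full chains of `B_n` meeting `F`. -/
noncomputable def abar (m n : ℕ) : ℕ :=
  sInf {a | ∃ F : Finset (Finset (Fin n)), F.card = m ∧ chainCount F = a}

/-!
A full chain of `B_n` is the same as a permutation `σ` of `[n]`, read as the chain of images
`σ '' {0, …, i - 1}`. The permutations whose chain passes through `S` form a fibre of
`σ ↦ σ '' {0, …, |S| - 1}`, and fibres over sets of equal size are translates of each other, so
`n! / C(n, |S|) ≥ n! / C(n, ⌊n/2⌋)` chains pass through `S`, with equality on the middle level.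
Taking `m` middle sets gives the upper bound. For the lower bound, Bonferroni's inequality leaves
the chains through two comparable sets `S ⊂ T`. By the same fibre argument they are a
`1 / C(|T|, |S|)` fraction of the chains through `T` and a `1 / C(n - |S|, |T| - |S|)` fraction of
those through `S`; these binomials are at least `|T|` and `n - |S|`, whose sum exceeds `n`. This
needs `S ≠ ∅` and `T ≠ [n]`, but a family containing `∅` or `[n]` meets all `n!` chains anyway.
-/

open Finset Equiv Function Filter Topology
open scoped Pointwise Nat

lemma card_filter_smul_eq_smul {G β : Type*} [Group G] [Fintype G] [MulAction G β]
    [DecidableEq β] (x y : β) (τ : G) :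
    #{g : G | g • x = τ • y} = #{g : G | g • x = y} :=
  card_nbij' (τ⁻¹ * ·) (τ * ·) (fun g hg => by simp_all [mul_smul])
    (fun g hg => by simp_all [mul_smul]) (fun g _ => by simp) (fun g _ => by simp)

lemma Equiv.Perm.ofSubtype_smul_finset_map_subtype {α : Type*} [DecidableEq α] {p : α → Prop}
    [DecidablePred p] (g : Perm (Subtype p)) (X : Finset (Subtype p)) :
    Perm.ofSubtype g • X.map (Embedding.subtype p) = (g • X).map (Embedding.subtype p) := by
  simp only [smul_finset_def, map_eq_image, image_image]
  congr 1
  funext x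
  exact Perm.ofSubtype_apply_coe g x

lemma Equiv.Perm.exists_smul_finset_eq_of_subset {α : Type*} [DecidableEq α]
    {A B U : Finset α} (hA : A ⊆ U) (hB : B ⊆ U) (h : #A = #B) :
    ∃ τ : Perm α, τ • A = B ∧ τ • U = U := by
  have hcard : ∀ {X : Finset α}, X ⊆ U → #(X.subtype (· ∈ U)) = #X := fun hX => by
    rw [card_subtype, filter_true_of_mem hX]
  obtain ⟨g, hg⟩ := (Set.powersetCard.isPretransitive (α := U) (n := #A)).exists_smul_eq
    ⟨A.subtype (· ∈ U), hcard hA⟩ ⟨B.subtype (· ∈ U), (hcard hB).trans h.symm⟩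
  have hg' : g • A.subtype (· ∈ U) = B.subtype (· ∈ U) := by
    simpa [← Subtype.coe_inj] using hg
  refine ⟨Perm.ofSubtype g, ?_, ?_⟩
  · rw [← subtype_map_of_mem hA, ← subtype_map_of_mem hB,
      Perm.ofSubtype_smul_finset_map_subtype, hg']
  · have := Perm.ofSubtype_smul_finset_map_subtype g univ
    rwa [smul_finset_univ, univ_eq_attach, attach_map_val] at this

lemma Finset.sum_card_le_card_biUnion_add_sum_card_inter {ι β : Type*} [DecidableEq ι]
    [DecidableEq β] (s : Finset ι) (f : ι → Finset β) :
    ∑ i ∈ s, #(f i) ≤ #(s.biUnion f) + ∑ p ∈ s.offDiag, #(f p.1 ∩ f p.2) := by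
  induction s using Finset.induction_on with
  | empty => simp
  | insert a s ha ih =>
    have hdisj : Disjoint s.offDiag ({a} ×ˢ s) :=
      disjoint_left.2 fun p hp hp' =>
        ha (mem_singleton.1 (mem_product.1 hp').1 ▸ (mem_offDiag.1 hp).1)
    have hsub : s.offDiag ∪ {a} ×ˢ s ⊆ (insert a s).offDiag := by
      rw [offDiag_insert ha]
      exact subset_union_left
    have hpairs : ∑ p ∈ s.offDiag, #(f p.1 ∩ f p.2) + ∑ i ∈ s, #(f a ∩ f i)
        ≤ ∑ p ∈ (insert a s).offDiag, #(f p.1 ∩ f p.2) := by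
      rw [show ∑ i ∈ s, #(f a ∩ f i) = ∑ p ∈ {a} ×ˢ s, #(f p.1 ∩ f p.2) by
        rw [sum_product, sum_singleton], ← sum_union hdisj]
      exact sum_le_sum_of_subset hsub
    have hinter : #(f a ∩ s.biUnion f) ≤ ∑ i ∈ s, #(f a ∩ f i) := by
      rw [inter_biUnion]
      exact card_biUnion_le
    have := card_union_add_card_inter (f a) (s.biUnion f)
    rw [sum_insert ha, biUnion_insert]
    omega

lemma Nat.le_choose_of_pos_of_lt {a k : ℕ} (h0 : 0 < k) (hk : k < a) : a ≤ a.choose k := by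
  induction a generalizing k with
  | zero => omega
  | succ a ih =>
    obtain _ | _ | k := k
    · omega
    · simp
    · have h1 : a ≤ a.choose (k + 1) := ih (Nat.succ_pos k) (by omega)
      have h2 : 0 < a.choose (k + 1 + 1) := Nat.choose_pos (by omega)
      rw [Nat.choose_succ_succ' a (k + 1)]
      omega

lemma Nat.le_choose_half (n : ℕ) : n ≤ n.choose (n / 2) :=
  (Nat.choose_one_right n).symm.trans_le (Nat.choose_le_middle 1 n)

def lowerBlock (n k : ℕ) : Finset (Fin n) := {j | (j : ℕ) < k}

section Chains

variable {n : ℕ}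

@[simp] lemma mem_lowerBlock {k : ℕ} {j : Fin n} : j ∈ lowerBlock n k ↔ (j : ℕ) < k := by
  simp [lowerBlock]

lemma card_lowerBlock {k : ℕ} (h : k ≤ n) : #(lowerBlock n k) = k := by
  rw [← card_range k, ← card_attachFin (range k) fun j hj => (mem_range.1 hj).trans_le h]
  congr 1
  ext j
  simp

lemma lowerBlock_mono : Monotone (lowerBlock n) :=
  fun _ _ h _ => by simp only [mem_lowerBlock]; omega

lemma lowerBlock_self : lowerBlock n n = univ := by
  ext j
  simp

lemma lowerBlock_succ_sdiff (j : Fin n) : lowerBlock n (j + 1) \ lowerBlock n j = {j} := by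
  ext i
  simp [Fin.ext_iff]
  omega

def permChain (σ : Perm (Fin n)) (i : Fin (n + 1)) : Finset (Fin n) := σ • lowerBlock n i

lemma isFullChain_permChain (σ : Perm (Fin n)) : IsFullChain (permChain σ) :=
  ⟨fun i => by rw [permChain, card_smul_finset, card_lowerBlock (Fin.is_le i)],
    fun _ _ h => smul_finset_subset_smul_finset (lowerBlock_mono h)⟩

lemma permChain_injective : Injective (permChain (n := n)) := by
  intro σ τ h
  ext j : 1
  have hj : ∀ ρ : Perm (Fin n), permChain ρ j.succ \ permChain ρ j.castSucc = {ρ j} := by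
    intro ρ
    rw [permChain, permChain, ← smul_finset_sdiff, Fin.val_succ, Fin.val_castSucc,
      lowerBlock_succ_sdiff, smul_finset_singleton, Perm.smul_def]
  exact singleton_injective ((hj σ).symm.trans (h ▸ hj τ))

lemma exists_permChain_eq {c : Fin (n + 1) → Finset (Fin n)} (hc : IsFullChain c) :
    ∃ σ, permChain σ = c := by
  have hstep : ∀ j : Fin n, ∃ a, c j.succ \ c j.castSucc = {a} := fun j => by
    rw [← card_eq_one, card_sdiff_of_subset (hc.2 _ _ (Fin.castSucc_le_succ j)), hc.1, hc.1]
    simp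
  choose f hf using hstep
  have hfmem : ∀ j, f j ∈ c j.succ ∧ f j ∉ c j.castSucc := fun j =>
    mem_sdiff.1 ((hf j).symm ▸ mem_singleton_self _)
  have hf_mem : ∀ {i : Fin n} {k : Fin (n + 1)}, (i : ℕ) < k → f i ∈ c k := fun hik =>
    hc.2 _ _ (Fin.le_def.2 (by simpa using hik)) (hfmem _).1
  have hne : ∀ i j, i < j → f i ≠ f j := fun i j hij hfij =>
    (hfmem j).2 (hfij ▸ hf_mem (by simpa using hij))
  have hinj : Injective f := fun i j hfij =>
    le_antisymm (not_lt.1 fun h => hne _ _ h hfij.symm) (not_lt.1 fun h => hne _ _ h hfij)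
  refine ⟨Equiv.ofBijective f (Finite.injective_iff_bijective.1 hinj), funext fun k => ?_⟩
  refine eq_of_subset_of_card_le ?_ (by rw [(isFullChain_permChain _).1, hc.1])
  intro x hx
  obtain ⟨i, hi, rfl⟩ := mem_smul_finset.1 hx
  exact hf_mem (mem_lowerBlock.1 hi)

def permsThrough (S : Finset (Fin n)) : Finset (Perm (Fin n)) := {σ | σ • lowerBlock n #S = S}

lemma chainCount_eq_card_biUnion (F : Finset (Finset (Fin n))) :
    chainCount F = #(F.biUnion permsThrough) := by
  classical
  unfold chainCount
  refine (card_bij (fun σ _ => permChain σ) ?_ (fun σ _ τ _ h => permChain_injective h) ?_).symm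
  · intro σ hσ
    obtain ⟨S, hS, hσS⟩ := mem_biUnion.1 hσ
    have hSn : #S < n + 1 := Nat.lt_succ_of_le (by simpa using card_le_univ S)
    refine mem_filter.2 ⟨mem_univ _, isFullChain_permChain σ, ⟨#S, hSn⟩, ?_⟩
    rwa [permChain, (mem_filter.1 hσS).2]
  · intro c hc
    obtain ⟨hfull, i, hi⟩ := (mem_filter.1 hc).2
    obtain ⟨σ, rfl⟩ := exists_permChain_eq hfull
    refine ⟨σ, mem_biUnion.2 ⟨_, hi, mem_filter.2 ⟨mem_univ _, ?_⟩⟩, rfl⟩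
    rw [(isFullChain_permChain σ).1 i]
    rfl

lemma subset_or_subset_of_mem_permsThrough {σ : Perm (Fin n)} {S T : Finset (Fin n)}
    (hS : σ ∈ permsThrough S) (hT : σ ∈ permsThrough T) : S ⊆ T ∨ T ⊆ S := by
  simp only [permsThrough, mem_filter, mem_univ, true_and] at hS hT
  rw [← hS, ← hT]
  exact (le_total #S #T).imp (fun h => smul_finset_subset_smul_finset (lowerBlock_mono h))
    (fun h => smul_finset_subset_smul_finset (lowerBlock_mono h))

lemma choose_card_mul_card_permsThrough_inter {S T : Finset (Fin n)} (hST : S ⊆ T) :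
    (#T).choose #S * #(permsThrough S ∩ permsThrough T) = #(permsThrough T) := by
  have hst : #S ≤ #T := card_le_card hST
  have htn : #T ≤ n := by simpa using card_le_univ T
  have hfiber : ∀ A, {σ ∈ permsThrough T | σ • lowerBlock n #S = A}
      = ({σ | σ • (lowerBlock n #S, lowerBlock n #T) = (A, T)} : Finset (Perm (Fin n))) :=
    fun A => by ext σ; simp [permsThrough, Prod.ext_iff, and_comm]
  have hinter : permsThrough S ∩ permsThrough T
      = ({σ | σ • (lowerBlock n #S, lowerBlock n #T) = (S, T)} : Finset (Perm (Fin n))) := by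
    ext σ; simp [permsThrough, Prod.ext_iff]
  have hmaps : ∀ σ ∈ permsThrough T, σ • lowerBlock n #S ∈ powersetCard #S T := by
    intro σ hσ
    refine mem_powersetCard.2 ⟨?_, by rw [card_smul_finset, card_lowerBlock (hst.trans htn)]⟩
    rw [← (mem_filter.1 hσ).2]
    exact smul_finset_subset_smul_finset (lowerBlock_mono hst)
  rw [card_eq_sum_card_fiberwise hmaps, sum_const_nat (m := #(permsThrough S ∩ permsThrough T)),
    card_powersetCard]
  intro A hA
  obtain ⟨τ, hτS, hτT⟩ := Perm.exists_smul_finset_eq_of_subset hST (mem_powersetCard.1 hA).1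
    (mem_powersetCard.1 hA).2.symm
  have htransport := card_filter_smul_eq_smul (lowerBlock n #S, lowerBlock n #T) (S, T) τ
  rw [Prod.smul_mk, hτS, hτT] at htransport
  rw [hfiber, htransport, hinter]

lemma permsThrough_univ : permsThrough (univ : Finset (Fin n)) = univ := by
  ext σ
  simp [permsThrough, lowerBlock_self]

lemma choose_card_mul_card_permsThrough (S : Finset (Fin n)) :
    n.choose #S * #(permsThrough S) = n ! := by
  simpa [permsThrough_univ, Fintype.card_perm] using
    choose_card_mul_card_permsThrough_inter (subset_univ S)

lemma choose_sub_mul_card_permsThrough_inter {S T : Finset (Fin n)} (hST : S ⊆ T) :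
    (n - #S).choose (#T - #S) * #(permsThrough S ∩ permsThrough T) = #(permsThrough S) := by
  refine Nat.eq_of_mul_eq_mul_left (Nat.choose_pos (card_le_univ S |>.trans_eq (card_fin n))) ?_
  rw [choose_card_mul_card_permsThrough, ← mul_assoc, ← Nat.choose_mul (card_le_card hST),
    mul_assoc, choose_card_mul_card_permsThrough_inter hST, choose_card_mul_card_permsThrough]

lemma succ_mul_card_permsThrough_inter_le_of_ssubset {S T : Finset (Fin n)} (hST : S ⊂ T)
    (hS : S.Nonempty) (hT : T ≠ univ) :
    (n + 1) * #(permsThrough S ∩ permsThrough T) ≤ #(permsThrough S) + #(permsThrough T) := by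
  have hs : 0 < #S := hS.card_pos
  have hst : #S < #T := card_lt_card hST
  have htn : #T < n := by simpa using (card_lt_iff_ne_univ T).2 hT
  have h1 : #T ≤ (#T).choose #S := Nat.le_choose_of_pos_of_lt hs hst
  have h2 : n - #S ≤ (n - #S).choose (#T - #S) := Nat.le_choose_of_pos_of_lt (by omega) (by omega)
  calc (n + 1) * #(permsThrough S ∩ permsThrough T)
      ≤ ((n - #S).choose (#T - #S) + (#T).choose #S) * #(permsThrough S ∩ permsThrough T) :=
        Nat.mul_le_mul_right _ (by omega)
    _ = #(permsThrough S) + #(permsThrough T) := by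
        rw [add_mul, choose_sub_mul_card_permsThrough_inter hST.subset,
          choose_card_mul_card_permsThrough_inter hST.subset]

lemma succ_mul_card_permsThrough_inter_le {S T : Finset (Fin n)} (hne : S ≠ T)
    (hS : S.Nonempty ∧ S ≠ univ) (hT : T.Nonempty ∧ T ≠ univ) :
    (n + 1) * #(permsThrough S ∩ permsThrough T) ≤ #(permsThrough S) + #(permsThrough T) := by
  obtain h | ⟨σ, hσ⟩ := (permsThrough S ∩ permsThrough T).eq_empty_or_nonempty
  · simp [h]
  obtain ⟨hσS, hσT⟩ := mem_inter.1 hσ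
  obtain hST | hTS := subset_or_subset_of_mem_permsThrough hσS hσT
  · exact succ_mul_card_permsThrough_inter_le_of_ssubset (hST.ssubset_of_ne hne) hS.1 hT.2
  · rw [inter_comm, add_comm #(permsThrough S)]
    exact succ_mul_card_permsThrough_inter_le_of_ssubset (hTS.ssubset_of_ne hne.symm) hT.1 hS.2

end Chains

section Bounds

variable {n : ℕ}

lemma sub_mul_sum_card_permsThrough_le {F : Finset (Finset (Fin n))}
    (hF : ∀ S ∈ F, S.Nonempty ∧ S ≠ univ) :
    (n + 1 - 2 * #F) * ∑ S ∈ F, #(permsThrough S) ≤ (n + 1) * chainCount F := by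
  have hbonferroni := Nat.mul_le_mul_left (n + 1)
    (sum_card_le_card_biUnion_add_sum_card_inter F permsThrough)
  have hpairs : (n + 1) * ∑ p ∈ F.offDiag, #(permsThrough p.1 ∩ permsThrough p.2)
      ≤ 2 * #F * ∑ S ∈ F, #(permsThrough S) :=
    calc (n + 1) * ∑ p ∈ F.offDiag, #(permsThrough p.1 ∩ permsThrough p.2)
        ≤ ∑ p ∈ F.offDiag, (#(permsThrough p.1) + #(permsThrough p.2)) := by
          rw [mul_sum]
          refine sum_le_sum fun p hp => ?_
          obtain ⟨h1, h2, hne⟩ := mem_offDiag.1 hp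
          exact succ_mul_card_permsThrough_inter_le hne (hF _ h1) (hF _ h2)
      _ ≤ ∑ p ∈ F ×ˢ F, (#(permsThrough p.1) + #(permsThrough p.2)) :=
          sum_le_sum_of_subset (diag_union_offDiag (s := F) ▸ subset_union_right)
      _ = 2 * #F * ∑ S ∈ F, #(permsThrough S) := by
          simp only [sum_product, sum_add_distrib, sum_const, smul_eq_mul, ← mul_sum]
          ring
  rw [chainCount_eq_card_biUnion, Nat.sub_mul]
  rw [mul_add] at hbonferroni
  omega

lemma card_permsThrough_of_eq_empty_or_univ {S : Finset (Fin n)} (hS : S = ∅ ∨ S = univ) :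
    #(permsThrough S) = n ! := by
  have hchoose : n.choose #S = 1 := by rcases hS with rfl | rfl <;> simp
  simpa [hchoose] using choose_card_mul_card_permsThrough S

lemma le_choose_mul_chainCount {F : Finset (Finset (Fin n))} (hC : #F ≤ n.choose (n / 2)) :
    (n + 1 - 2 * #F) * (#F * n !) ≤ (n + 1) * (n.choose (n / 2) * chainCount F) := by
  by_cases hF : ∀ S ∈ F, S.Nonempty ∧ S ≠ univ
  · have hmid : #F * n ! ≤ n.choose (n / 2) * ∑ S ∈ F, #(permsThrough S) := by
      rw [← smul_eq_mul, ← sum_const, mul_sum]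
      refine sum_le_sum fun S _ => ?_
      rw [← choose_card_mul_card_permsThrough S]
      exact Nat.mul_le_mul_right _ (Nat.choose_le_middle _ _)
    calc (n + 1 - 2 * #F) * (#F * n !)
        ≤ (n + 1 - 2 * #F) * (n.choose (n / 2) * ∑ S ∈ F, #(permsThrough S)) := by gcongr
      _ = n.choose (n / 2) * ((n + 1 - 2 * #F) * ∑ S ∈ F, #(permsThrough S)) := by ring
      _ ≤ n.choose (n / 2) * ((n + 1) * chainCount F) :=
          Nat.mul_le_mul_left _ (sub_mul_sum_card_permsThrough_le hF)
      _ = (n + 1) * (n.choose (n / 2) * chainCount F) := by ring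
  · simp only [not_forall, not_and_or, not_nonempty_iff_eq_empty, not_ne_iff] at hF
    obtain ⟨S, hSF, hS'⟩ := hF
    have hall : n ! ≤ chainCount F := by
      rw [chainCount_eq_card_biUnion, ← card_permsThrough_of_eq_empty_or_univ hS']
      exact card_le_card (subset_biUnion_of_mem _ hSF)
    calc (n + 1 - 2 * #F) * (#F * n !) ≤ (n + 1) * (n.choose (n / 2) * n !) := by
          gcongr; omega
      _ ≤ (n + 1) * (n.choose (n / 2) * chainCount F) := by gcongr

lemma exists_card_eq_choose_mul_chainCount_eq {m : ℕ} (hm : m ≤ n.choose (n / 2)) :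
    ∃ F : Finset (Finset (Fin n)), #F = m ∧ n.choose (n / 2) * chainCount F = m * n ! := by
  obtain ⟨F, hFmid, rfl⟩ := exists_subset_card_eq
    (s := powersetCard (n / 2) (univ : Finset (Fin n))) (by simpa using hm)
  have hcard : ∀ S ∈ F, #S = n / 2 := fun S hS => (mem_powersetCard.1 (hFmid hS)).2
  refine ⟨F, rfl, ?_⟩
  have hdisj : (F : Set (Finset (Fin n))).PairwiseDisjoint permsThrough := by
    intro S hS T hT hne
    refine disjoint_left.2 fun σ hσS hσT => hne ?_
    simp only [permsThrough, mem_filter, mem_univ, true_and, hcard S hS, hcard T hT] at hσS hσT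
    rw [← hσS, hσT]
  rw [chainCount_eq_card_biUnion, card_biUnion hdisj, mul_sum,
    sum_const_nat fun S hS => hcard S hS ▸ choose_card_mul_card_permsThrough S]

lemma choose_mul_abar_le {m : ℕ} (hm : m ≤ n.choose (n / 2)) :
    n.choose (n / 2) * abar m n ≤ m * n ! := by
  obtain ⟨F, hF, hcount⟩ := exists_card_eq_choose_mul_chainCount_eq hm
  exact hcount ▸ Nat.mul_le_mul_left _ (Nat.sInf_le ⟨F, hF, rfl⟩)

lemma le_choose_mul_abar {m : ℕ} (hm : m ≤ n.choose (n / 2)) :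
    (n + 1 - 2 * m) * (m * n !) ≤ (n + 1) * (n.choose (n / 2) * abar m n) := by
  obtain ⟨F₀, hF₀, -⟩ := exists_card_eq_choose_mul_chainCount_eq hm
  have hne : {a | ∃ F : Finset (Finset (Fin n)), #F = m ∧ chainCount F = a}.Nonempty :=
    ⟨_, F₀, hF₀, rfl⟩
  obtain ⟨F, rfl, hF⟩ := Nat.sInf_mem hne
  rw [abar, ← hF]
  exact le_choose_mul_chainCount hm

end Bounds

/-- Proposition. For fixed `m ≥ 1`,
`ā(m, n) ∼ m · n! / C(n, ⌊n/2⌋)`; that is,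
`ā(m,n) · C(n, ⌊n/2⌋) / (m · n!) → 1` as `n → ∞`. -/
theorem abar_asymptotics (m : ℕ) (hm : 1 ≤ m) :
    Filter.Tendsto
      (fun n : ℕ => (abar m n : ℝ) * (n.choose (n / 2) : ℝ) / ((m : ℝ) * n.factorial))
      Filter.atTop (nhds 1) := by
  have hlower : Tendsto (fun n : ℕ => 1 - 2 * m / ((n : ℝ) + 1)) atTop (𝓝 1) := by
    simpa using tendsto_const_nhds.sub
      (tendsto_const_div_atTop_nhds_zero_nat (2 * m : ℝ) |>.comp (tendsto_add_atTop_nat 1))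
  refine tendsto_of_tendsto_of_tendsto_of_le_of_le' hlower tendsto_const_nhds ?_ ?_
  · filter_upwards [eventually_ge_atTop (2 * m)] with n hn
    have hle : ((n + 1 - 2 * m : ℕ) : ℝ) * (m * n !)
        ≤ (n + 1) * (n.choose (n / 2) * abar m n) := by
      exact_mod_cast le_choose_mul_abar ((by omega : m ≤ n).trans (Nat.le_choose_half n))
    rw [Nat.cast_sub (by omega)] at hle
    push_cast at hle
    rw [show 1 - 2 * m / ((n : ℝ) + 1) = (n + 1 - 2 * m) / (n + 1) by field_simp,
      div_le_div_iff₀ (by positivity) (by positivity)]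
    linarith
  · filter_upwards [eventually_ge_atTop m] with n hn
    rw [div_le_one (by positivity)]
    exact_mod_cast (mul_comm _ _).trans_le (choose_mul_abar_le (hn.trans (Nat.le_choose_half n)))
end

section
/- Let P be a finite poset and suppose F_1, ..., F_t are pairwise unrelated copies of P in B_n. Then t · ā(c(P), n) ≤ n!, where ā(m, n) is the minimum over all families of m subsets of [n] of the number of full chains in B_n meeting the family. Consequently Pa(n, P) ≤ |P| · n! / ā(c(P), n). -/
/-- The convex closure of a family `F` of subsets of `[n]`:
all `S` with `A ⊆ S ⊆ B` for some `A, B ∈ F`. -/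
def convexClosure {n : ℕ} (F : Finset (Finset (Fin n))) : Finset (Finset (Fin n)) :=
  Finset.univ.filter (fun S => ∃ A ∈ F, ∃ B ∈ F, A ⊆ S ∧ S ⊆ B)

/-- `c(P)`: the minimum size of the convex closure of the image of a weak embedding
of `P` into a Boolean lattice `B_k`, over all `k` and all weak embeddings. -/
noncomputable def closureNum (P : Type*) [PartialOrder P] [Fintype P] : ℕ :=
  sInf {m | ∃ (k : ℕ) (f : P → Finset (Fin k)), IsWeakEmbedding f ∧
    (convexClosure (Finset.image f Finset.univ)).card = m}

noncomputable def newEl {n : ℕ} (c : Fin (n+1) → Finset (Fin n)) (j : Fin n) : Fin n :=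
  if h : (c j.succ \ c j.castSucc).Nonempty then (c j.succ \ c j.castSucc).min' h else j

lemma newEl_mem {n : ℕ} {c : Fin (n+1) → Finset (Fin n)} (hc : IsFullChain c) (j : Fin n) :
    newEl c j ∈ c j.succ \ c j.castSucc := by
  have hsub : c j.castSucc ⊆ c j.succ := hc.2 _ _ (Fin.castSucc_le_succ j)
  have hcard : (c j.succ \ c j.castSucc).card = 1 := by
    rw [Finset.card_sdiff_of_subset hsub, hc.1, hc.1, Fin.val_succ, Fin.coe_castSucc]
    omega
  have hne : (c j.succ \ c j.castSucc).Nonempty := Finset.card_pos.mp (by omega)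
  rw [newEl, dif_pos hne]
  exact Finset.min'_mem _ hne

lemma chain_succ_eq {n : ℕ} {c : Fin (n+1) → Finset (Fin n)} (hc : IsFullChain c) (j : Fin n) :
    c j.succ = insert (newEl c j) (c j.castSucc) := by
  have hmem := newEl_mem hc j
  rw [Finset.mem_sdiff] at hmem
  have hsub : c j.castSucc ⊆ c j.succ := hc.2 _ _ (Fin.castSucc_le_succ j)
  have h1 : insert (newEl c j) (c j.castSucc) ⊆ c j.succ := by
    intro x hx
    rcases Finset.mem_insert.mp hx with h | h
    · exact h ▸ hmem.1
    · exact hsub h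
  refine (Finset.eq_of_subset_of_card_le h1 ?_).symm
  rw [Finset.card_insert_of_notMem hmem.2, hc.1, hc.1, Fin.val_succ, Fin.coe_castSucc]

lemma newEl_inj {n : ℕ} {c : Fin (n+1) → Finset (Fin n)} (hc : IsFullChain c) :
    Function.Injective (newEl c) := by
  intro j k h
  by_contra hne
  wlog hlt : j < k generalizing j k
  · exact this h.symm (Ne.symm hne) (lt_of_le_of_ne (not_lt.mp hlt) (Ne.symm hne))
  have h1 := newEl_mem hc j
  have h2 := newEl_mem hc k
  rw [Finset.mem_sdiff] at h1 h2
  have hle : j.succ ≤ k.castSucc := by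
    simp only [Fin.le_def, Fin.val_succ, Fin.coe_castSucc]
    omega
  exact h2.2 (h ▸ hc.2 _ _ hle h1.1)

lemma chain_eq_of_newEl_eq {n : ℕ} {c c' : Fin (n+1) → Finset (Fin n)}
    (hc : IsFullChain c) (hc' : IsFullChain c') (h : newEl c = newEl c') : c = c' := by
  have key : ∀ m : ℕ, ∀ hm : m < n + 1, c ⟨m, hm⟩ = c' ⟨m, hm⟩ := by
    intro m
    induction m with
    | zero => intro hm
              have h1 : c ⟨0, hm⟩ = ∅ := Finset.card_eq_zero.mp (hc.1 _)
              have h2 : c' ⟨0, hm⟩ = ∅ := Finset.card_eq_zero.mp (hc'.1 _)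
              rw [h1, h2]
    | succ m ih =>
        intro hm
        have hmn : m < n := by omega
        have e1 : (⟨m + 1, hm⟩ : Fin (n+1)) = (⟨m, hmn⟩ : Fin n).succ := rfl
        have e2 : (⟨m, by omega⟩ : Fin (n+1)) = (⟨m, hmn⟩ : Fin n).castSucc := rfl
        rw [e1, chain_succ_eq hc, chain_succ_eq hc', h]
        exact congrArg (insert _) (ih (Nat.lt_of_succ_lt hm))
  funext i
  have := key i.val i.isLt
  simpa using this

open Finset in
lemma fullChains_card_le (n : ℕ) [DecidablePred (IsFullChain (n := n))] :
    (Finset.univ.filter (fun c : Fin (n+1) → Finset (Fin n) => IsFullChain c)).card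
      ≤ n.factorial := by
  classical
  have : (Finset.univ.filter (fun c : Fin (n+1) → Finset (Fin n) => IsFullChain c)).card
      ≤ (Finset.univ : Finset (Fin n ↪ Fin n)).card := by
    apply Finset.card_le_card_of_injOn
      (fun c => if h : IsFullChain c then ⟨newEl c, newEl_inj h⟩ else Function.Embedding.refl _)
    · intro _ _; exact Finset.mem_univ _
    · intro a ha b hb hab
      rw [Finset.mem_coe, Finset.mem_filter] at ha hb
      simp only [ha.2, hb.2, dite_true, Function.Embedding.mk.injEq] at hab
      exact chain_eq_of_newEl_eq ha.2 hb.2 hab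
  calc _ ≤ _ := this
    _ = Fintype.card (Fin n ↪ Fin n) := Finset.card_univ
    _ = n.factorial := by rw [Fintype.card_embedding_eq]; simp [Nat.descFactorial_self]
section Aux

open scoped Classical

lemma chainCount_mono {n : ℕ} {G G' : Finset (Finset (Fin n))} (h : G' ⊆ G) :
    chainCount G' ≤ chainCount G := by
  rw [chainCount, chainCount]
  apply Finset.card_le_card
  intro c hc
  rw [Finset.mem_filter] at hc ⊢
  obtain ⟨hu, hfc, k, hk⟩ := hc
  exact ⟨hu, hfc, k, h hk⟩

lemma abar_le_chainCount {n m : ℕ} {G : Finset (Finset (Fin n))} (h : m ≤ G.card) :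
    abar m n ≤ chainCount G := by
  obtain ⟨G', hsub, hcard⟩ := Finset.exists_subset_card_eq h
  exact le_trans (Nat.sInf_le ⟨G', hcard, rfl⟩) (chainCount_mono hsub)

lemma main_bound (P : Type*) [PartialOrder P] [Fintype P]
    (n t : ℕ) (F : Fin t → Finset (Finset (Fin n)))
    (hcopy : ∀ i, IsCopy P (F i))
    (hunrel : ∀ i j, i ≠ j → Unrelated (F i) (F j)) :
    t * abar (closureNum P) n ≤ n.factorial := by
  set T : Fin t → Finset (Fin (n+1) → Finset (Fin n)) :=
    fun i => Finset.univ.filter (fun c => IsFullChain c ∧ ∃ k, c k ∈ convexClosure (F i)) with hT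
  have hTc : ∀ i, chainCount (convexClosure (F i)) = (T i).card := fun i => rfl
  have step1 : ∀ i, abar (closureNum P) n ≤ (T i).card := by
    intro i
    rw [← hTc]
    apply abar_le_chainCount
    obtain ⟨f, hf, hFi⟩ := hcopy i
    exact Nat.sInf_le ⟨n, f, hf, by rw [hFi]⟩
  have hdisj : ∀ i ∈ (Finset.univ : Finset (Fin t)), ∀ j ∈ Finset.univ, i ≠ j →
      Disjoint (T i) (T j) := by
    intro i _ j _ hij
    rw [Finset.disjoint_left]
    intro c hci hcj
    rw [hT, Finset.mem_filter] at hci hcj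
    obtain ⟨_, hfc, k₁, hk₁⟩ := hci
    obtain ⟨_, _, k₂, hk₂⟩ := hcj
    rw [convexClosure, Finset.mem_filter] at hk₁ hk₂
    obtain ⟨_, A₁, hA₁, B₁, hB₁, hA₁s, hsB₁⟩ := hk₁
    obtain ⟨_, A₂, hA₂, B₂, hB₂, hA₂s, hsB₂⟩ := hk₂
    rcases le_total k₁ k₂ with hle | hle
    · exact (hunrel i j hij A₁ hA₁ B₂ hB₂).1
        (hA₁s.trans ((hfc.2 _ _ hle).trans hsB₂))
    · exact (hunrel i j hij B₁ hB₁ A₂ hA₂).2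
        (hA₂s.trans ((hfc.2 _ _ hle).trans hsB₁))
  calc t * abar (closureNum P) n
      = (Finset.univ : Finset (Fin t)).card • abar (closureNum P) n := by
        rw [Finset.card_univ, Fintype.card_fin, smul_eq_mul]
    _ ≤ ∑ i, (T i).card := Finset.card_nsmul_le_sum _ _ _ (fun i _ => step1 i)
    _ = (Finset.univ.biUnion T).card := (Finset.card_biUnion hdisj).symm
    _ ≤ (Finset.univ.filter (fun c : Fin (n+1) → Finset (Fin n) => IsFullChain c)).card := by
        apply Finset.card_le_card
        intro c hc
        rw [Finset.mem_biUnion] at hc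
        obtain ⟨i, _, hci⟩ := hc
        rw [hT, Finset.mem_filter] at hci
        exact Finset.mem_filter.mpr ⟨Finset.mem_univ _, hci.2.1⟩
    _ ≤ n.factorial := fullChains_card_le n

end Aux

/-- If `F₁, …, F_t` are pairwise unrelated copies of `P` in `B_n`,
then `t · ā(c(P), n) ≤ n!`; consequently `Pa(n, P) · ā(c(P), n) ≤ |P| · n!`
(i.e., `Pa(n, P) ≤ |P| · n! / ā(c(P), n)`). -/
theorem copies_times_abar_le_factorial (P : Type*) [PartialOrder P] [Fintype P]
    (n t : ℕ) (F : Fin t → Finset (Finset (Fin n)))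
    (hcopy : ∀ i, IsCopy P (F i))
    (hunrel : ∀ i j, i ≠ j → Unrelated (F i) (F j)) :
    t * abar (closureNum P) n ≤ n.factorial ∧
      Pa P n * abar (closureNum P) n ≤ Fintype.card P * n.factorial := by
  classical
  refine ⟨main_bound P n t F hcopy hunrel, ?_⟩
  set S := {m | ∃ F : Finset (Finset (Fin n)), IsUnionOfUnrelatedCopies P F ∧ F.card = m}
    with hS
  have hbound : ∀ m ∈ S, m * abar (closureNum P) n ≤ Fintype.card P * n.factorial := by
    rintro m ⟨G, ⟨𝒞, h1, h2, rfl⟩, rfl⟩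
    have hc1 : (𝒞.sup id).card ≤ 𝒞.card * Fintype.card P := by
      rw [Finset.sup_eq_biUnion]
      refine le_trans Finset.card_biUnion_le ?_
      refine le_trans (Finset.sum_le_card_nsmul _ _ (Fintype.card P) ?_) (le_of_eq (smul_eq_mul ..))
      intro C hC
      obtain ⟨f, hf, rfl⟩ := h1 C hC
      exact le_trans Finset.card_image_le (by simp)
    have hc2 : 𝒞.card * abar (closureNum P) n ≤ n.factorial := by
      have e := 𝒞.equivFin
      refine main_bound P n 𝒞.card (fun i => ((e.symm i : { x // x ∈ 𝒞 }) : Finset (Finset (Fin n))))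
        (fun i => h1 _ (e.symm i).2) ?_
      intro i j hij
      refine h2 _ (e.symm i).2 _ (e.symm j).2 ?_
      intro hcontra
      exact hij (e.symm.injective (Subtype.coe_injective hcontra))
    calc (𝒞.sup id).card * abar (closureNum P) n
        ≤ 𝒞.card * Fintype.card P * abar (closureNum P) n := Nat.mul_le_mul hc1 le_rfl
      _ = Fintype.card P * (𝒞.card * abar (closureNum P) n) := by ring
      _ ≤ Fintype.card P * n.factorial := Nat.mul_le_mul le_rfl hc2
  by_cases ha : abar (closureNum P) n = 0
  · simp [ha]
  · have hne : S.Nonempty := ⟨0, ∅, ⟨∅, by simp, by simp, by simp⟩, rfl⟩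
    have hbdd : BddAbove S := by
      refine ⟨Fintype.card P * n.factorial, fun m hm => ?_⟩
      have := hbound m hm
      have h1 : m ≤ m * abar (closureNum P) n :=
        Nat.le_mul_of_pos_right m (Nat.pos_of_ne_zero ha)
      omega
    exact hbound _ (Nat.sSup_mem hne hbdd)
end

section
/- For the four-element poset J on {a, b, c, d} with relations a < b < c and a < d (with d incomparable to b and c), c(J) = 4 and c*(J) = 5. -/
/-- A strong embedding of a poset `P` into the Boolean lattice `B_n`:
an injective map such that `a < b` iff `f a ⊊ f b`. -/
def IsStrongEmbedding {P : Type*} [PartialOrder P] {n : ℕ} (f : P → Finset (Fin n)) : Prop :=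
  Function.Injective f ∧ ∀ a b : P, a < b ↔ f a ⊂ f b

/-- `c*(P)`: the minimum size of the convex closure of the image of a strong embedding
of `P` into a Boolean lattice `B_k`, over all `k` and all strong embeddings. -/
noncomputable def closureNumStar (P : Type*) [PartialOrder P] [Fintype P] : ℕ :=
  sInf {m | ∃ (k : ℕ) (f : P → Finset (Fin k)), IsStrongEmbedding f ∧
    (convexClosure (Finset.image f Finset.univ)).card = m}

/-- The four-element poset `J`, with `a < b < c`, `a < d`, and `d` incomparable
to both `b` and `c`. -/
inductive JT : Type
  | a | b | c | d
  deriving DecidableEq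

instance : Fintype JT where
  elems := {JT.a, JT.b, JT.c, JT.d}
  complete := by
    intro x
    cases x <;> first | decide | simp

instance : PartialOrder JT where
  le x y := x = y ∨ x = JT.a ∨ (x = JT.b ∧ y = JT.c)
  le_refl x := Or.inl rfl
  le_trans := by
    intro x y z hxy hyz
    rcases hxy with rfl | h | ⟨hb, hc⟩
    · exact hyz
    · exact Or.inr (Or.inl h)
    · subst hb; subst hc
      rcases hyz with rfl | h | ⟨h1, h2⟩
      · exact Or.inr (Or.inr ⟨rfl, rfl⟩)
      · exact absurd h (by decide)
      · exact absurd h1 (by decide)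
  le_antisymm := by
    intro x y hxy hyx
    rcases hxy with rfl | h | ⟨h1, h2⟩
    · rfl
    · subst h
      rcases hyx with h' | h' | ⟨h1', h2'⟩
      · exact h'.symm
      · exact h'.symm
      · exact absurd h2' (by decide)
    · subst h1; subst h2
      rcases hyx with h' | h' | ⟨h1', h2'⟩
      · exact h'.symm
      · exact absurd h' (by decide)
      · exact absurd h1' (by decide)

/-!
The upper bounds come from explicit embeddings into `B_2` and `B_3` whose images are already
convex. For the lower bounds, a weak embedding is injective, so its image alone has four
elements. A strong embedding `f` sends the chain `a < b < c` to a strict chain, so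
`|f c \ f a| ≥ 2` and the interval `[f a, f c]`, which lies in the closure, has at least
`2 ^ 2 = 4` elements; `f d` lies outside it because `d ≰ c`.
-/

open Finset

theorem subset_convexClosure {n : ℕ} (F : Finset (Finset (Fin n))) : F ⊆ convexClosure F :=
  fun S hS => mem_filter.2 ⟨mem_univ S, S, hS, S, hS, subset_rfl, subset_rfl⟩

theorem Icc_subset_convexClosure {n : ℕ} {F : Finset (Finset (Fin n))} {A C : Finset (Fin n)}
    (hA : A ∈ F) (hC : C ∈ F) : Icc A C ⊆ convexClosure F := fun S hS =>
  mem_filter.2 ⟨mem_univ S, A, hA, C, hC, (mem_Icc.1 hS).1, (mem_Icc.1 hS).2⟩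

theorem card_le_card_convexClosure_image {P : Type*} [Fintype P] {n : ℕ}
    {f : P → Finset (Fin n)} (hf : Function.Injective f) :
    Fintype.card P ≤ (convexClosure (univ.image f)).card := by
  rw [← card_univ, ← card_image_of_injective univ hf]
  exact card_le_card (subset_convexClosure _)

theorem IsStrongEmbedding.le_of_subset {P : Type*} [PartialOrder P] {n : ℕ}
    {f : P → Finset (Fin n)} (hf : IsStrongEmbedding f) {x y : P} (hxy : f x ⊆ f y) : x ≤ y := by
  obtain heq | hlt := hxy.eq_or_ssubset
  · exact (hf.1 heq).le
  · exact ((hf.2 x y).2 hlt).le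

theorem IsStrongEmbedding.five_le_card_convexClosure {P : Type*} [PartialOrder P] [Fintype P]
    {n : ℕ} {f : P → Finset (Fin n)} (hf : IsStrongEmbedding f) {a b c d : P}
    (hab : a < b) (hbc : b < c) (hdc : ¬d ≤ c) :
    5 ≤ (convexClosure (univ.image f)).card := by
  have hAB := card_lt_card ((hf.2 a b).1 hab)
  have hBC := card_lt_card ((hf.2 b c).1 hbc)
  have hAC : f a ⊆ f c := ((hf.2 a c).1 (hab.trans hbc)).subset
  have hd : f d ∉ Icc (f a) (f c) := fun h => hdc (hf.le_of_subset (mem_Icc.1 h).2)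
  have hIcc : 4 ≤ (Icc (f a) (f c)).card := by
    rw [card_Icc_finset hAC]
    exact le_trans (by norm_num) (Nat.pow_le_pow_right two_pos (by omega : 2 ≤ _))
  have hmem : ∀ x, f x ∈ univ.image f := fun x => mem_image_of_mem f (mem_univ x)
  calc 5 ≤ (insert (f d) (Icc (f a) (f c))).card := by rw [card_insert_of_notMem hd]; omega
    _ ≤ _ := card_le_card <| insert_subset (subset_convexClosure _ (hmem d))
      (Icc_subset_convexClosure (hmem a) (hmem c))

instance : DecidableLE JT := fun x y =>
  decidable_of_iff (x = y ∨ x = JT.a ∨ (x = JT.b ∧ y = JT.c)) Iff.rfl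

instance : DecidableLT JT := decidableLTOfDecidableLE

def weakEmbeddingJ : JT → Finset (Fin 2)
  | .a => ∅
  | .b => {0}
  | .c => {0, 1}
  | .d => {1}

def strongEmbeddingJ : JT → Finset (Fin 3)
  | .a => ∅
  | .b => {0}
  | .c => {0, 1}
  | .d => {2}

/-- For the four-element poset `J` (with `a < b < c` and `a < d`,
`d` incomparable to `b` and `c`), `c(J) = 4` and `c*(J) = 5`. -/
theorem closureNum_J : closureNum JT = 4 ∧ closureNumStar JT = 5 := by
  constructor
  · refine IsLeast.csInf_eq ⟨⟨2, weakEmbeddingJ, by unfold IsWeakEmbedding; decide, by decide⟩, ?_⟩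
    rintro _ ⟨k, f, hf, rfl⟩
    exact card_le_card_convexClosure_image hf.1
  · refine IsLeast.csInf_eq ⟨⟨3, strongEmbeddingJ, by unfold IsStrongEmbedding; decide, by decide⟩, ?_⟩
    rintro _ ⟨k, f, hf, rfl⟩
    exact hf.five_le_card_convexClosure (a := .a) (b := .b) (c := .c) (d := .d)
      (by decide) (by decide) (by decide)
end

section
/- For n ≥ 1, the maximum size of a family F of subsets of [n] containing no (weak) copy of V and no (weak) copy of Λ equals 2·C(n−1, ⌊(n−1)/2⌋). Here V is the poset {a, b, c} with a < b and a < c, and Λ is the poset {a, b, c} with a > b and a > c. -/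
/-- The family `F` contains a (weak) copy of the poset `Q`: there is an injective
`g : Q → F` with `x < y` implying `g x ⊊ g y`. -/
def ContainsCopy (Q : Type*) [PartialOrder Q] {n : ℕ}
    (F : Finset (Finset (Fin n))) : Prop :=
  ∃ g : Q → Finset (Fin n), Function.Injective g ∧ (∀ x, g x ∈ F) ∧
    ∀ x y : Q, x < y → g x ⊂ g y

/-- The three-element poset `V`, with `a < b`, `a < c`, and `b, c` incomparable. -/
inductive VT : Type
  | a | b | c
  deriving DecidableEq

instance : Fintype VT := ⟨{VT.a, VT.b, VT.c}, fun x => by cases x <;> first | decide | simp⟩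

instance : PartialOrder VT where
  le x y := x = y ∨ x = VT.a
  le_refl x := Or.inl rfl
  le_trans := by
    intro x y z hxy hyz
    rcases hxy with rfl | h
    · exact hyz
    · exact Or.inr h
  le_antisymm := by
    intro x y hxy hyx
    rcases hxy with rfl | h
    · rfl
    · rcases hyx with h' | h'
      · exact h'.symm
      · rw [h, h']

/-!
If `F` contains neither `V` nor `Λ`, every member of `F` is comparable with at most one other
member, so comparability is an equivalence relation on `F` whose classes are single sets or pairs
`A ⊂ B`. Encode the maximal chains of `B_n`, `n = m + 1`, by permutations and count them. Distinct
classes are met by disjoint sets of maximal chains; a pair is met by at least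
`T = n! / C(m, ⌊m/2⌋)` of them (inclusion–exclusion) and a single set by at least `T / 2`. Hence
`T · |F| ≤ 2 · n!`. Equality holds for the `⌊m/2⌋`-subsets of `[n - 1]` together with the same
sets with `n` added.
-/

open Finset Equiv
open scoped Nat

section PermsCarrying

variable {α : Type*} [Fintype α] [DecidableEq α]

def permsCarrying (s t : Finset α) : Finset (Perm α) := {σ | ∀ x, x ∈ s ↔ σ x ∈ t}

theorem card_permsCarrying (s t : Finset α) (h : #s = #t) :
    #(permsCarrying s t) = (#s)! * (Fintype.card α - #s)! := by
  let e : {σ : Perm α // ∀ x, x ∈ s ↔ σ x ∈ t} ≃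
      ({x // x ∈ s} ≃ {x // x ∈ t}) × ({x // x ∉ s} ≃ {x // x ∉ t}) :=
    { toFun σ := (σ.1.subtypeEquiv σ.2, σ.1.subtypeEquiv fun x => (σ.2 x).not)
      invFun p := ⟨subtypeCongr p.1 p.2, fun x => by
        by_cases hx : x ∈ s <;> simp [subtypeCongr, hx, (p.2 _).2]⟩
      left_inv σ := by
        ext x
        by_cases hx : x ∈ s <;> simp [subtypeCongr, hx]
      right_inv p := by
        ext x <;> simp [subtypeCongr, x.2] }
  have hcompl : Fintype.card {x // x ∉ s} = Fintype.card {x // x ∉ t} := by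
    simp [Fintype.card_subtype_compl, h]
  rw [permsCarrying, ← Fintype.card_subtype, Fintype.card_congr e, Fintype.card_prod,
    Fintype.card_equiv (Fintype.equivOfCardEq (by simpa using h)),
    Fintype.card_equiv (Fintype.equivOfCardEq hcompl)]
  simp [Fintype.card_subtype_compl]

theorem card_permsCarrying_inter_le {s s' t t' : Finset α} (hs : s ⊆ s') (ht : t ⊆ t')
    (h : #s = #t) (h' : #s' = #t') :
    #(permsCarrying s t ∩ permsCarrying s' t') ≤
      (#s)! * (#s' - #s)! * (Fintype.card α - #s')! := by
  have hmid (σ : Perm α) (hσ : (∀ x, x ∈ s ↔ σ x ∈ t) ∧ ∀ x, x ∈ s' ↔ σ x ∈ t') (x : α) :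
      x ∈ s' \ s ↔ σ x ∈ t' \ t := by
    simp only [mem_sdiff, hσ.1, hσ.2]
  let restrict (σ : {σ : Perm α // (∀ x, x ∈ s ↔ σ x ∈ t) ∧ ∀ x, x ∈ s' ↔ σ x ∈ t'}) :
      ({x // x ∈ s} ≃ {x // x ∈ t}) × ({x // x ∈ s' \ s} ≃ {x // x ∈ t' \ t}) ×
        ({x // x ∉ s'} ≃ {x // x ∉ t'}) :=
    (σ.1.subtypeEquiv σ.2.1, σ.1.subtypeEquiv (hmid σ.1 σ.2),
      σ.1.subtypeEquiv fun x => (σ.2.2 x).not)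
  have hinj : Function.Injective restrict := by
    intro σ τ hστ
    simp only [restrict, Prod.mk.injEq, Equiv.ext_iff, Subtype.forall, Subtype.ext_iff,
      subtypeEquiv_apply] at hστ
    ext x
    by_cases hx : x ∈ s
    · exact hστ.1 x hx
    by_cases hx' : x ∈ s'
    · exact hστ.2.1 x (mem_sdiff.2 ⟨hx', hx⟩)
    · exact hστ.2.2 x hx'
  have h₁ : Fintype.card {x // x ∈ s} = Fintype.card {x // x ∈ t} := by simpa using h
  have h₂ : Fintype.card {x // x ∈ s' \ s} = Fintype.card {x // x ∈ t' \ t} := by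
    rw [Fintype.card_coe, Fintype.card_coe, card_sdiff_of_subset hs, card_sdiff_of_subset ht,
      h, h']
  have h₃ : Fintype.card {x // x ∉ s'} = Fintype.card {x // x ∉ t'} := by
    simp [Fintype.card_subtype_compl, h']
  rw [permsCarrying, permsCarrying, ← filter_and, ← Fintype.card_subtype]
  refine (Fintype.card_le_of_injective restrict hinj).trans_eq ?_
  rw [Fintype.card_prod, Fintype.card_prod, Fintype.card_equiv (Fintype.equivOfCardEq h₁),
    Fintype.card_equiv (Fintype.equivOfCardEq h₂), Fintype.card_equiv (Fintype.equivOfCardEq h₃),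
    Fintype.card_coe, Fintype.card_coe, card_sdiff_of_subset hs, Fintype.card_subtype_compl,
    Fintype.card_coe, mul_assoc]

end PermsCarrying

section Chains

variable {n : ℕ}

def initSeg (n k : ℕ) : Finset (Fin n) := {i | (i : ℕ) < k}

theorem card_initSeg {k : ℕ} (hk : k ≤ n) : #(initSeg n k) = k := by
  have : (initSeg n k).map Fin.valEmbedding = range k := by
    ext m
    simp only [initSeg, mem_map, mem_filter, mem_univ, true_and, Fin.valEmbedding_apply, mem_range]
    exact ⟨fun ⟨i, hi, h⟩ => h ▸ hi, fun hm => ⟨⟨m, by omega⟩, hm, rfl⟩⟩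
  rw [← card_map, this, card_range]

theorem initSeg_mono {k l : ℕ} (h : k ≤ l) : initSeg n k ⊆ initSeg n l := by
  intro i
  simp only [initSeg, mem_filter, mem_univ, true_and]
  omega

/-- A permutation `σ` encodes the maximal chain `∅ ⊂ {σ 0} ⊂ {σ 0, σ 1} ⊂ ⋯` of `B_n`. -/
def chainsThrough (A : Finset (Fin n)) : Finset (Perm (Fin n)) :=
  permsCarrying (initSeg n #A) A

theorem card_chainsThrough (A : Finset (Fin n)) :
    #(chainsThrough A) = (#A)! * (n - #A)! := by
  have h : #(initSeg n #A) = #A := card_initSeg (by simpa using card_le_univ A)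
  exact (card_permsCarrying _ _ h).trans (by rw [h, Fintype.card_fin])

theorem card_chainsThrough_inter_le {A B : Finset (Fin n)} (hAB : A ⊆ B) :
    #(chainsThrough A ∩ chainsThrough B) ≤ (#A)! * (#B - #A)! * (n - #B)! := by
  have hA : #(initSeg n #A) = #A := card_initSeg (by simpa using card_le_univ A)
  have hB : #(initSeg n #B) = #B := card_initSeg (by simpa using card_le_univ B)
  exact (card_permsCarrying_inter_le (initSeg_mono (card_le_card hAB)) hAB hA hB).trans_eq
    (by rw [hA, hB, Fintype.card_fin])

theorem subset_or_subset_of_mem_chainsThrough {A B : Finset (Fin n)} {σ : Perm (Fin n)}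
    (hA : σ ∈ chainsThrough A) (hB : σ ∈ chainsThrough B) : A ⊆ B ∨ B ⊆ A := by
  simp only [chainsThrough, permsCarrying, mem_filter, mem_univ, true_and] at hA hB
  have key {A B : Finset (Fin n)} (hAB : #A ≤ #B) (hA : ∀ i, i ∈ initSeg n #A ↔ σ i ∈ A)
      (hB : ∀ i, i ∈ initSeg n #B ↔ σ i ∈ B) : A ⊆ B := fun x hx => by
    rw [← σ.apply_symm_apply x] at hx ⊢
    exact (hB _).1 (initSeg_mono hAB ((hA _).2 hx))
  exact (le_total #A #B).imp (key · hA hB) (key · hB hA)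

end Chains

/-- `(m + 1)! / C(m, ⌊m/2⌋)`, written without division. -/
def chainQuota (m : ℕ) : ℕ := (m + 1) * ((m / 2)! * (m - m / 2)!)

theorem chainQuota_mul_choose (m : ℕ) : chainQuota m * m.choose (m / 2) = (m + 1)! := by
  rw [chainQuota, Nat.factorial_succ,
    ← Nat.choose_mul_factorial_mul_factorial (Nat.div_le_self m 2)]
  ring

theorem factorial_half_mul_factorial_le {m x : ℕ} (hx : x ≤ m) :
    (m / 2)! * (m - m / 2)! ≤ x ! * (m - x)! := by
  have hpos : 0 < m.choose (m / 2) := Nat.choose_pos (Nat.div_le_self m 2)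
  refine Nat.le_of_mul_le_mul_left ?_ hpos
  calc m.choose (m / 2) * ((m / 2)! * (m - m / 2)!) = m ! := by
        rw [← Nat.choose_mul_factorial_mul_factorial (Nat.div_le_self m 2), mul_assoc]
    _ = m.choose x * (x ! * (m - x)!) := by
        rw [← Nat.choose_mul_factorial_mul_factorial hx, mul_assoc]
    _ ≤ m.choose (m / 2) * (x ! * (m - x)!) := Nat.mul_le_mul_right _ (Nat.choose_le_middle x m)

theorem chainQuota_le_factorial (m : ℕ) : chainQuota m ≤ (m + 1)! := by
  rw [chainQuota, Nat.factorial_succ]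
  simpa using Nat.mul_le_mul_left (m + 1) (factorial_half_mul_factorial_le (Nat.zero_le m))

theorem chainQuota_le_two_mul {m x : ℕ} (hx : x ≤ m + 1) :
    chainQuota m ≤ 2 * (x ! * (m + 1 - x)!) := by
  have hT := chainQuota_le_factorial m
  rcases x.eq_zero_or_pos with rfl | hx₀
  · simp only [Nat.factorial_zero, one_mul, Nat.sub_zero]; omega
  rcases hx.eq_or_lt with rfl | hxm
  · simp only [Nat.sub_self, Nat.factorial_zero, mul_one]; omega
  obtain ⟨i, rfl⟩ : ∃ i, x = i + 1 := ⟨x - 1, by omega⟩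
  obtain ⟨k, rfl⟩ : ∃ k, m = i + 1 + k := ⟨m - (i + 1), by omega⟩
  have h₁ := factorial_half_mul_factorial_le (show i + 1 ≤ i + 1 + k by omega)
  have h₂ := factorial_half_mul_factorial_le (show i ≤ i + 1 + k by omega)
  set Q := ((i + 1 + k) / 2)! * (i + 1 + k - (i + 1 + k) / 2)!
  rw [show i + 1 + k - (i + 1) = k by omega] at h₁
  rw [show i + 1 + k - i = k + 1 by omega] at h₂
  rw [show i + 1 + k + 1 - (i + 1) = k + 1 by omega]
  calc chainQuota (i + 1 + k) = (k + 1) * Q + (i + 1) * Q := by rw [chainQuota]; ring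
    _ ≤ (k + 1) * ((i + 1)! * k !) + (i + 1) * (i ! * (k + 1)!) := by gcongr
    _ = 2 * ((i + 1)! * (k + 1)!) := by simp only [Nat.factorial_succ]; ring

theorem factorial_succ_mul_factorial_succ_le (i j : ℕ) : (i + 1)! * (j + 1)! ≤ (i + j + 1)! := by
  have h : j + 1 ≤ (i + 1 + j).choose j := by
    rw [← Nat.choose_succ_self_right]; exact Nat.choose_le_choose j (by omega)
  calc (i + 1)! * (j + 1)! = (j + 1) * (i + 1)! * j ! := by rw [Nat.factorial_succ j]; ring
    _ ≤ (i + 1 + j).choose j * (i + 1)! * j ! := by gcongr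
    _ = (i + j + 1)! := by rw [Nat.add_choose_mul_factorial_mul_factorial, add_right_comm]

theorem chainQuota_add_le {m a b : ℕ} (hab : a < b) (hb : b ≤ m + 1) :
    chainQuota m + a ! * (b - a)! * (m + 1 - b)! ≤ a ! * (m + 1 - a)! + b ! * (m + 1 - b)! := by
  have hT := chainQuota_le_factorial m
  rcases a.eq_zero_or_pos with rfl | ha₀
  · simp only [Nat.factorial_zero, one_mul, Nat.sub_zero]; omega
  rcases hb.eq_or_lt with rfl | hbm
  · simp only [Nat.sub_self, Nat.factorial_zero, mul_one]; omega
  obtain ⟨i, rfl⟩ : ∃ i, a = i + 1 := ⟨a - 1, by omega⟩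
  obtain ⟨j, rfl⟩ : ∃ j, b = i + j + 1 + 1 := ⟨b - i - 2, by omega⟩
  obtain ⟨k, rfl⟩ : ∃ k, m = i + j + 1 + k := ⟨m - (i + j + 1), by omega⟩
  have h₁ := factorial_half_mul_factorial_le (show i + 1 ≤ i + j + 1 + k by omega)
  have h₂ := factorial_half_mul_factorial_le (show i + j + 1 ≤ i + j + 1 + k by omega)
  set Q := ((i + j + 1 + k) / 2)! * (i + j + 1 + k - (i + j + 1 + k) / 2)!
  rw [show i + j + 1 + k - (i + 1) = j + k by omega] at h₁
  rw [show i + j + 1 + k - (i + j + 1) = k by omega] at h₂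
  rw [show i + j + 1 + 1 - (i + 1) = j + 1 by omega,
    show i + j + 1 + k + 1 - (i + 1) = j + k + 1 by omega,
    show i + j + 1 + k + 1 - (i + j + 1 + 1) = k by omega]
  -- The overlap `a! (b - a)! (m + 1 - b)!` is at most `(b - 1)! (m + 1 - b)!`,
  -- a `b`-th of the `b! (m + 1 - b)!` chains through a `b`-set.
  calc chainQuota (i + j + 1 + k) + (i + 1)! * (j + 1)! * k !
      ≤ (j + k + 1) * Q + (i + j + 1) * Q + (i + j + 1)! * k ! := by
        rw [chainQuota, ← add_mul]
        exact add_le_add (Nat.mul_le_mul_right _ (by omega))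
          (Nat.mul_le_mul_right _ (factorial_succ_mul_factorial_succ_le i j))
    _ ≤ (j + k + 1) * ((i + 1)! * (j + k)!) + (i + j + 1) * ((i + j + 1)! * k !)
        + (i + j + 1)! * k ! := by gcongr
    _ = (i + 1)! * (j + k + 1)! + (i + j + 1 + 1)! * k ! := by
        rw [Nat.factorial_succ (j + k), Nat.factorial_succ (i + j + 1)]; ring

theorem chainQuota_le_two_mul_card_chainsThrough {m : ℕ} (A : Finset (Fin (m + 1))) :
    chainQuota m ≤ 2 * #(chainsThrough A) := by
  rw [card_chainsThrough]
  exact chainQuota_le_two_mul (by simpa using card_le_univ A)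

theorem chainQuota_le_card_chainsThrough_union {m : ℕ} {A B : Finset (Fin (m + 1))}
    (hAB : A ⊂ B) : chainQuota m ≤ #(chainsThrough A ∪ chainsThrough B) := by
  have hunion := card_union_add_card_inter (chainsThrough A) (chainsThrough B)
  have hinter := card_chainsThrough_inter_le hAB.subset
  have hquota := chainQuota_add_le (card_lt_card hAB) (by simpa using card_le_univ B)
  rw [card_chainsThrough, card_chainsThrough] at hunion
  omega

theorem chainQuota_mul_card_le_card_biUnion {m : ℕ} {K : Finset (Finset (Fin (m + 1)))}
    (hK : IsChain (· ≤ ·) (K : Set (Finset (Fin (m + 1))))) (hK₂ : #K ≤ 2) :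
    chainQuota m * #K ≤ 2 * #(K.biUnion chainsThrough) := by
  interval_cases h : #K
  · simp
  · obtain ⟨A, rfl⟩ := card_eq_one.1 h
    simpa using chainQuota_le_two_mul_card_chainsThrough A
  · obtain ⟨A, B, hAB, rfl⟩ := card_eq_two.1 h
    rw [biUnion_insert, singleton_biUnion, mul_comm]
    refine Nat.mul_le_mul_left 2 ?_
    rcases hK (by simp) (by simp) hAB with h | h
    · exact chainQuota_le_card_chainsThrough_union (h.lt_of_ne hAB)
    · rw [union_comm]
      exact chainQuota_le_card_chainsThrough_union (h.lt_of_ne hAB.symm)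

section ComparabilityMatching

variable {α : Type*} [PartialOrder α] {F : Finset α} {a b c d : α}

def IsComparabilityMatching (F : Finset α) : Prop :=
  ∀ a ∈ F, ∀ b ∈ F, ∀ c ∈ F, a ≠ b → a ≠ c → (a ≤ b ∨ b ≤ a) → (a ≤ c ∨ c ≤ a) → b = c

theorem isComparabilityMatching_of_forall
    (hV : ∀ a ∈ F, ∀ b ∈ F, ∀ c ∈ F, a < b → a < c → b = c)
    (hΛ : ∀ a ∈ F, ∀ b ∈ F, ∀ c ∈ F, b < a → c < a → b = c) : IsComparabilityMatching F := by
  intro a ha b hb c hc hab hac h₁ h₂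
  rcases h₁ with h₁ | h₁ <;> rcases h₂ with h₂ | h₂
  · exact hV a ha b hb c hc (h₁.lt_of_ne hab) (h₂.lt_of_ne hac)
  · exact absurd (hV c hc a ha b hb (h₂.lt_of_ne' hac) ((h₂.lt_of_ne' hac).trans_le h₁)) hab
  · exact absurd (hV b hb a ha c hc (h₁.lt_of_ne' hab) ((h₁.lt_of_ne' hab).trans_le h₂)) hac
  · exact hΛ a ha b hb c hc (h₁.lt_of_ne' hab) (h₂.lt_of_ne' hac)

theorem IsComparabilityMatching.comparable_trans (hF : IsComparabilityMatching F)
    (ha : a ∈ F) (hb : b ∈ F) (hc : c ∈ F) (hab : a ≤ b ∨ b ≤ a) (hbc : b ≤ c ∨ c ≤ b) :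
    a ≤ c ∨ c ≤ a := by
  rcases eq_or_ne b a with rfl | hba
  · exact hbc
  rcases eq_or_ne b c with rfl | hbc'
  · exact hab
  exact Or.inl (hF b hb a ha c hc hba hbc' hab.symm hbc).le

variable [DecidableLE α]

def compClass (F : Finset α) (a : α) : Finset α := {b ∈ F | a ≤ b ∨ b ≤ a}

theorem mem_compClass : b ∈ compClass F a ↔ b ∈ F ∧ (a ≤ b ∨ b ≤ a) := mem_filter

theorem self_mem_compClass (ha : a ∈ F) : a ∈ compClass F a :=
  mem_compClass.2 ⟨ha, Or.inl le_rfl⟩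

theorem IsComparabilityMatching.compClass_eq (hF : IsComparabilityMatching F) (ha : a ∈ F)
    (hb : b ∈ compClass F a) : compClass F b = compClass F a := by
  obtain ⟨hbF, hab⟩ := mem_compClass.1 hb
  ext c
  simp only [mem_compClass]
  exact ⟨fun ⟨hc, hbc⟩ => ⟨hc, hF.comparable_trans ha hbF hc hab hbc⟩,
    fun ⟨hc, hac⟩ => ⟨hc, hF.comparable_trans hbF ha hc hab.symm hac⟩⟩

theorem IsComparabilityMatching.compClass_eq_of_comparable (hF : IsComparabilityMatching F)
    (ha : a ∈ F) (hb : b ∈ F) (hc : c ∈ compClass F a) (hd : d ∈ compClass F b)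
    (hcd : c ≤ d ∨ d ≤ c) : compClass F a = compClass F b := by
  have hdc : d ∈ compClass F c := mem_compClass.2 ⟨(mem_compClass.1 hd).1, hcd⟩
  rw [← hF.compClass_eq ha hc, ← hF.compClass_eq hb hd, hF.compClass_eq (mem_compClass.1 hc).1 hdc]

theorem IsComparabilityMatching.card_compClass_le_two [DecidableEq α]
    (hF : IsComparabilityMatching F) (ha : a ∈ F) : #(compClass F a) ≤ 2 := by
  have h : #((compClass F a).erase a) ≤ 1 := card_le_one.2 fun b hb c hc => by
    simp only [mem_erase, mem_compClass] at hb hc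
    exact hF a ha b hb.2.1 c hc.2.1 (Ne.symm hb.1) (Ne.symm hc.1) hb.2.2 hc.2.2
  have := pred_card_le_card_erase (s := compClass F a) (a := a)
  omega

theorem IsComparabilityMatching.isChain_compClass (hF : IsComparabilityMatching F)
    (ha : a ∈ F) : IsChain (· ≤ ·) (compClass F a : Set α) := fun b hb c hc _ => by
  rw [mem_coe, mem_compClass] at hb hc
  exact hF.comparable_trans hb.1 ha hc.1 hb.2.symm hc.2

end ComparabilityMatching

theorem chainQuota_mul_card_le {m : ℕ} {F : Finset (Finset (Fin (m + 1)))}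
    (hF : IsComparabilityMatching F) : chainQuota m * #F ≤ 2 * (m + 1)! := by
  set 𝒦 := F.image (compClass F)
  have hF𝒦 : F = 𝒦.biUnion id := by
    ext X
    simp only [𝒦, mem_biUnion, mem_image, id, exists_exists_and_eq_and]
    exact ⟨fun hX => ⟨X, hX, self_mem_compClass hX⟩,
      fun ⟨_, _, hX⟩ => (mem_compClass.1 hX).1⟩
  have hdisj : (𝒦 : Set (Finset (Finset (Fin (m + 1))))).PairwiseDisjoint
      (·.biUnion chainsThrough) := by
    simp only [𝒦, coe_image]
    rintro _ ⟨Y₁, hY₁, rfl⟩ _ ⟨Y₂, hY₂, rfl⟩ hne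
    refine disjoint_left.2 fun σ h₁ h₂ => hne ?_
    obtain ⟨U, hU, hσU⟩ := mem_biUnion.1 h₁
    obtain ⟨W, hW, hσW⟩ := mem_biUnion.1 h₂
    exact hF.compClass_eq_of_comparable hY₁ hY₂ hU hW
      (subset_or_subset_of_mem_chainsThrough hσU hσW)
  have hdisj' : (𝒦 : Set (Finset (Finset (Fin (m + 1))))).PairwiseDisjoint id := by
    simp only [𝒦, coe_image]
    rintro _ ⟨Y₁, hY₁, rfl⟩ _ ⟨Y₂, hY₂, rfl⟩ hne
    exact disjoint_left.2 fun X h₁ h₂ =>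
      hne (hF.compClass_eq_of_comparable hY₁ hY₂ h₁ h₂ (Or.inl le_rfl))
  calc chainQuota m * #F = ∑ K ∈ 𝒦, chainQuota m * #K := by
        rw [← mul_sum, hF𝒦, card_biUnion hdisj']
        rfl
    _ ≤ ∑ K ∈ 𝒦, 2 * #(K.biUnion chainsThrough) := by
        refine sum_le_sum fun K hK => ?_
        obtain ⟨X, hX, rfl⟩ := mem_image.1 hK
        exact chainQuota_mul_card_le_card_biUnion (hF.isChain_compClass hX)
          (hF.card_compClass_le_two hX)
    _ = 2 * #(𝒦.biUnion (·.biUnion chainsThrough)) := by rw [card_biUnion hdisj, mul_sum]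
    _ ≤ 2 * #(univ : Finset (Perm (Fin (m + 1)))) := by gcongr; exact subset_univ _
    _ = 2 * (m + 1)! := by rw [card_univ, Fintype.card_perm, Fintype.card_fin]

section Copies

theorem VT.lt_iff {x y : VT} : x < y ↔ x = .a ∧ y ≠ .a := by
  rw [lt_iff_le_not_ge]
  change (x = y ∨ x = .a) ∧ ¬(y = x ∨ y = .a) ↔ _
  cases x <;> cases y <;> simp

def VT.elim {β : Type*} (a b c : β) : VT → β
  | .a => a
  | .b => b
  | .c => c

theorem VT.elim_injective {β : Type*} {a b c : β} (hab : a ≠ b) (hac : a ≠ c) (hbc : b ≠ c) :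
    Function.Injective (VT.elim a b c) := by
  intro x y h
  cases x <;> cases y <;> simp_all [VT.elim, eq_comm]

variable {n : ℕ} {F : Finset (Finset (Fin n))}

theorem not_containsCopy_VT_iff :
    ¬ContainsCopy VT F ↔ ∀ A ∈ F, ∀ B ∈ F, ∀ C ∈ F, A ⊂ B → A ⊂ C → B = C := by
  constructor
  · intro h A hA B hB C hC hAB hAC
    by_contra hBC
    refine h ⟨VT.elim A B C, VT.elim_injective hAB.ne hAC.ne hBC, ?_, ?_⟩
    · rintro (_ | _ | _) <;> assumption
    · intro x y hxy
      obtain ⟨rfl, hy⟩ := VT.lt_iff.1 hxy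
      cases y <;> first | exact absurd rfl hy | assumption
  · rintro h ⟨g, hg, hgF, hlt⟩
    have hb : VT.a < VT.b := VT.lt_iff.2 ⟨rfl, by decide⟩
    have hc : VT.a < VT.c := VT.lt_iff.2 ⟨rfl, by decide⟩
    exact absurd (hg (h _ (hgF _) _ (hgF _) _ (hgF _) (hlt _ _ hb) (hlt _ _ hc))) (by decide)

theorem not_containsCopy_VT_dual_iff :
    ¬ContainsCopy VTᵒᵈ F ↔ ∀ A ∈ F, ∀ B ∈ F, ∀ C ∈ F, B ⊂ A → C ⊂ A → B = C := by
  constructor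
  · intro h A hA B hB C hC hBA hCA
    by_contra hBC
    refine h ⟨VT.elim A B C ∘ OrderDual.ofDual,
      (VT.elim_injective hBA.ne' hCA.ne' hBC).comp OrderDual.ofDual.injective, ?_, ?_⟩
    · rintro (_ | _ | _) <;> assumption
    · intro x y hxy
      obtain ⟨hy, hx⟩ := VT.lt_iff.1 (OrderDual.ofDual_lt_ofDual.2 hxy)
      simp only [Function.comp_apply, hy]
      cases hx' : OrderDual.ofDual x <;> first | exact absurd hx' hx | simpa [VT.elim, hx']
  · rintro h ⟨g, hg, hgF, hlt⟩
    have hb : OrderDual.toDual VT.b < OrderDual.toDual VT.a :=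
      VT.lt_iff.2 ⟨rfl, (by decide : VT.b ≠ VT.a)⟩
    have hc : OrderDual.toDual VT.c < OrderDual.toDual VT.a :=
      VT.lt_iff.2 ⟨rfl, (by decide : VT.c ≠ VT.a)⟩
    exact absurd (hg (h _ (hgF _) _ (hgF _) _ (hgF _) (hlt _ _ hb) (hlt _ _ hc))) (by decide)

end Copies

section PowersetCardWithInsert

variable {α : Type*} [DecidableEq α] {s : Finset α} {ℓ : α} {k : ℕ}

def powersetCardWithInsert (s : Finset α) (ℓ : α) (k : ℕ) : Finset (Finset α) :=
  s.powersetCard k ∪ (s.powersetCard k).image (insert ℓ)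

theorem card_powersetCardWithInsert (hℓ : ℓ ∉ s) :
    #(powersetCardWithInsert s ℓ k) = 2 * (#s).choose k := by
  have hℓS {S : Finset α} (hS : S ∈ s.powersetCard k) : ℓ ∉ S :=
    fun h => hℓ ((mem_powersetCard.1 hS).1 h)
  have hdisj : Disjoint (s.powersetCard k) ((s.powersetCard k).image (insert ℓ)) := by
    refine disjoint_left.2 fun S hS hS' => ?_
    obtain ⟨T, -, rfl⟩ := mem_image.1 hS'
    exact hℓS hS (mem_insert_self ℓ T)
  have hinj : Set.InjOn (insert ℓ) (s.powersetCard k : Set (Finset α)) := fun S hS T hT h => by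
    rw [← erase_insert (hℓS hS), ← erase_insert (hℓS hT), h]
  rw [powersetCardWithInsert, card_union_of_disjoint hdisj, card_image_of_injOn hinj,
    card_powersetCard, two_mul]

theorem eq_insert_of_ssubset_of_mem_powersetCardWithInsert (hℓ : ℓ ∉ s) ⦃A B : Finset α⦄
    (hA : A ∈ powersetCardWithInsert s ℓ k) (hB : B ∈ powersetCardWithInsert s ℓ k)
    (hAB : A ⊂ B) : ℓ ∉ A ∧ B = insert ℓ A := by
  simp only [powersetCardWithInsert, mem_union, mem_image, mem_powersetCard] at hA hB
  have hlt := card_lt_card hAB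
  rcases hA with ⟨hAs, rfl⟩ | ⟨S, ⟨hSs, rfl⟩, rfl⟩ <;>
    rcases hB with ⟨hBs, hBk⟩ | ⟨T, ⟨hTs, hTk⟩, rfl⟩
  · omega
  · have hℓA : ℓ ∉ A := fun h => hℓ (hAs h)
    have hAT : A ⊆ T := (subset_insert_iff_of_notMem hℓA).1 hAB.subset
    exact ⟨hℓA, by rw [eq_of_subset_of_card_le hAT (by omega)]⟩
  · exact absurd (hBs (hAB.subset (mem_insert_self ℓ S))) hℓ
  · have hS : #(insert ℓ S) = #S + 1 := card_insert_of_notMem fun h => hℓ (hSs h)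
    have hT : #(insert ℓ T) = #T + 1 := card_insert_of_notMem fun h => hℓ (hTs h)
    omega

end PowersetCardWithInsert

theorem exists_card_eq_not_containsCopy (m : ℕ) :
    ∃ F : Finset (Finset (Fin (m + 1))),
      ¬ContainsCopy VT F ∧ ¬ContainsCopy VTᵒᵈ F ∧ #F = 2 * m.choose (m / 2) := by
  have hℓ : Fin.last m ∉ univ.erase (Fin.last m) := notMem_erase _ _
  have key := eq_insert_of_ssubset_of_mem_powersetCardWithInsert (k := m / 2) hℓ
  refine ⟨powersetCardWithInsert (univ.erase (Fin.last m)) (Fin.last m) (m / 2),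
    not_containsCopy_VT_iff.2 ?_, not_containsCopy_VT_dual_iff.2 ?_, ?_⟩
  · intro A hA B hB C hC hAB hAC
    rw [(key hA hB hAB).2, (key hA hC hAC).2]
  · intro A hA B hB C hC hBA hCA
    obtain ⟨hℓB, hAB⟩ := key hB hA hBA
    obtain ⟨hℓC, hAC⟩ := key hC hA hCA
    rw [← erase_insert hℓB, ← erase_insert hℓC, ← hAB, ← hAC]
  · rw [card_powersetCardWithInsert hℓ, card_erase_of_mem (mem_univ _), card_univ,
      Fintype.card_fin, Nat.add_sub_cancel]

theorem card_le_of_not_containsCopy {m : ℕ} {F : Finset (Finset (Fin (m + 1)))}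
    (hV : ¬ContainsCopy VT F) (hΛ : ¬ContainsCopy VTᵒᵈ F) : #F ≤ 2 * m.choose (m / 2) := by
  have h := chainQuota_mul_card_le <| isComparabilityMatching_of_forall
    (not_containsCopy_VT_iff.1 hV) (not_containsCopy_VT_dual_iff.1 hΛ)
  rw [← chainQuota_mul_choose, mul_left_comm] at h
  exact Nat.le_of_mul_le_mul_left h (by rw [chainQuota]; positivity)

/-- Katona–Tarján. For `n ≥ 1`, the maximum size of a family of
subsets of `[n]` containing no weak copy of `V` and no weak copy of `Λ` (the dual
of `V`) is `2·C(n−1, ⌊(n−1)/2⌋)`. -/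
theorem la_V_Lambda (n : ℕ) (hn : 1 ≤ n) :
    sSup {m | ∃ F : Finset (Finset (Fin n)),
        ¬ContainsCopy VT F ∧ ¬ContainsCopy VTᵒᵈ F ∧ F.card = m}
      = 2 * (n - 1).choose ((n - 1) / 2) := by
  obtain ⟨m, rfl⟩ := Nat.exists_eq_add_of_le' hn
  rw [Nat.add_sub_cancel]
  refine IsGreatest.csSup_eq ⟨exists_card_eq_not_containsCopy m, ?_⟩
  rintro _ ⟨F, hV, hΛ, rfl⟩
  exact card_le_of_not_containsCopy hV hΛ
end
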